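/- arXiv:2601.06985 — 4 statements merged into one kernel-verified Lean document; each statement's English description precedes it below -/
import Mathlib

section
/- Let k ≥ 1 and let F be a smooth function on the k-jet space ℝ^{k+2} such that X^{(k)}F = 0 identically for each of the three generators X ∈ {∂_x, ∂_{y₀}, x∂_{y₀} − y₀∂_x} of se(2). Then the function G := ((1+y₁²)/y₂)·D_xF, defined on the open subset {y₂ ≠ 0} of the (k+1)-jet space ℝ^{k+3}, satisfies X^{(k+1)}G = 0 there for each of the three generators. In other words, the invariant derivation 𝔇 := ((1+y₁²)/y₂)·D_x maps SE(2)-invariant jet functions to SE(2)-invariant jet functions. -/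
noncomputable section

/-- The (infinite) jet space of plane curves `y = y(x)`:
coordinates `(x, y₀, y₁, y₂, …)`; a function of the `k`-jet space is regarded
as a function on this space depending only on `x, y₀, …, y_k`. -/
abbrev Jet : Type := ℝ × (ℕ → ℝ)

/-- Partial derivative `∂F/∂x`. -/
def pdX (F : Jet → ℝ) (p : Jet) : ℝ := deriv (fun t => F (t, p.2)) p.1

/-- Partial derivative `∂F/∂y_j`. -/
def pdY (j : ℕ) (F : Jet → ℝ) (p : Jet) : ℝ :=
  deriv (fun t => F (p.1, Function.update p.2 j t)) (p.2 j)

/-- The total derivative `D_x F = ∂F/∂x + Σ_j y_{j+1} ∂F/∂y_j`.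
For a function of a finite-order jet space all but finitely many summands
vanish, so the `tsum` is a finite sum. -/
def Dx (F : Jet → ℝ) : Jet → ℝ :=
  fun p => pdX F p + ∑' j : ℕ, p.2 (j + 1) * pdY j F p
/-- The coefficients `η_j` of the prolongation of the vector field
`ξ∂_x + η∂_{y₀}` on the plane: `η₀ = η`, `η_{j+1} = D_x η_j − y_{j+1}·D_x ξ`. -/
def etaCoef (ξ η : ℝ × ℝ → ℝ) : ℕ → Jet → ℝ
  | 0 => fun p => η (p.1, p.2 0)
  | j + 1 => fun p =>
      Dx (etaCoef ξ η j) p - p.2 (j + 1) * Dx (fun q => ξ (q.1, q.2 0)) p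

/-- The action of the prolongation `X^{(∞)} = ξ∂_x + Σ_j η_j ∂_{y_j}` of
`X = ξ∂_x + η∂_{y₀}` on a jet function (for a function of the `k`-jet space
this is exactly the action of `X^{(k)}`). -/
def prolong (ξ η : ℝ × ℝ → ℝ) (F : Jet → ℝ) (p : Jet) : ℝ :=
  ξ (p.1, p.2 0) * pdX F p + ∑' j : ℕ, etaCoef ξ η j p * pdY j F p

/-- Interpret a function `G` on the `k`-jet space `ℝ^{k+2}` (coordinates
`(x, y₀, …, y_k)`) as a function on the jet space. -/
def ofFin (k : ℕ) (G : (Fin (k + 2) → ℝ) → ℝ) : Jet → ℝ :=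
  fun p => G (fun i => if (i : ℕ) = 0 then p.1 else p.2 ((i : ℕ) - 1))

/-!
Write `T = (1, y₁, y₂, …)` for the vector of the total derivative and `V = (ξ, η₀, η₁, …)` for
the prolonged vector field. The recursion `η_{j+1} = D_x η_j − y_{j+1} D_x ξ` says exactly that
the bracket of `V` and `T` is `−(D_x ξ) T`, so that, by the symmetry of second derivatives,
`X⁽∞⁾(D_x F) = D_x(X⁽∞⁾F) − (D_x ξ) D_x F`. On an invariant `F` this leaves
`X⁽∞⁾(D_x F) = −(D_x ξ) D_x F`, hence `μ D_x F` is invariant as soon as `X⁽∞⁾μ = (D_x ξ) μ`.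
For `μ = (1 + y₁²)/y₂` this weight equation holds for the three generators: for the
translations `D_x ξ = η₁ = η₂ = 0`, and for the rotation `D_x ξ = −y₁`, `η₁ = 1 + y₁²` and
`η₂ = 3 y₁ y₂`.

Smooth functions of finite order are `G ∘ jetProj m` with `G` smooth on `ℝ^{m+2}`, and the
derivation along a vector `v` of the jet space acts on them as `fderiv G` applied to the
projection of `v`; this reduces all the calculus to finite dimensions.
-/

open scoped ContDiff

/-- Same coordinates `(x, y₀, …, y_m)` as in `ofFin`, so that `ofFin m G = G ∘ jetProj m`
holds by definition. -/
def jetProj (m : ℕ) : Jet →ₗ[ℝ] (Fin (m + 2) → ℝ) where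
  toFun p i := if (i : ℕ) = 0 then p.1 else p.2 ((i : ℕ) - 1)
  map_add' p q := by ext i; simp only [Pi.add_apply]; split_ifs <;> rfl
  map_smul' c p := by ext i; simp only [Pi.smul_apply]; split_ifs <;> rfl

theorem jetProj_apply (m : ℕ) (p : Jet) (i : Fin (m + 2)) :
    jetProj m p i = if (i : ℕ) = 0 then p.1 else p.2 ((i : ℕ) - 1) := rfl

def derivAlong (v : Jet) (F : Jet → ℝ) (p : Jet) : ℝ :=
  v.1 * pdX F p + ∑' j, v.2 j * pdY j F p

def totalVec (p : Jet) : Jet := (1, fun j => p.2 (j + 1))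

def prolongVec (ξ η : ℝ × ℝ → ℝ) (p : Jet) : Jet := (ξ (p.1, p.2 0), fun j => etaCoef ξ η j p)

theorem Dx_eq_derivAlong (F : Jet → ℝ) (p : Jet) : Dx F p = derivAlong (totalVec p) F p := by
  simp [Dx, derivAlong, totalVec]

theorem prolong_eq_derivAlong (ξ η : ℝ × ℝ → ℝ) (F : Jet → ℝ) (p : Jet) :
    prolong ξ η F p = derivAlong (prolongVec ξ η p) F p := rfl

theorem etaCoef_succ (ξ η : ℝ × ℝ → ℝ) (j : ℕ) (p : Jet) :
    etaCoef ξ η (j + 1) p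
      = Dx (etaCoef ξ η j) p - p.2 (j + 1) * Dx (fun q => ξ (q.1, q.2 0)) p := rfl

theorem deriv_comp_add_smul_sub {V : Type*} [NormedAddCommGroup V] [NormedSpace ℝ V]
    {G : V → ℝ} {x : V} (hG : DifferentiableAt ℝ G x) (w : V) (t₀ : ℝ) :
    deriv (fun t => G (x + (t - t₀) • w)) t₀ = fderiv ℝ G x w := by
  have hc : HasDerivAt (fun t : ℝ => x + (t - t₀) • w) w t₀ := by
    simpa using (((hasDerivAt_id t₀).sub_const t₀).smul_const w).const_add x
  have hG' : HasFDerivAt G (fderiv ℝ G x) (x + (t₀ - t₀) • w) := by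
    simpa using hG.hasFDerivAt
  exact (hG'.comp_hasDerivAt t₀ hc).deriv

theorem jetProj_eq_sum {m : ℕ} (v : Jet) :
    jetProj m v = v.1 • jetProj m (1, 0)
      + ∑ j ∈ Finset.range (m + 1), v.2 j • jetProj m (0, Pi.single j 1) := by
  ext i
  refine Fin.cases ?_ (fun i => ?_) i
  · simp [jetProj]
  · have hi : (i : ℕ) ∈ Finset.range (m + 1) := by simp [Nat.lt_succ_iff.mp i.isLt]
    simp [jetProj, Finset.sum_apply, Pi.single_apply, hi]

section comp_jetProj

variable {m : ℕ} {G : (Fin (m + 2) → ℝ) → ℝ} {p : Jet}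

theorem pdX_comp_jetProj (hG : DifferentiableAt ℝ G (jetProj m p)) :
    pdX (G ∘ jetProj m) p = fderiv ℝ G (jetProj m p) (jetProj m (1, 0)) := by
  rw [pdX, ← deriv_comp_add_smul_sub hG _ p.1]
  congr 1
  ext t
  simp only [Function.comp, ← map_smul, ← map_add]
  congr 2
  ext <;> simp

theorem pdY_comp_jetProj (hG : DifferentiableAt ℝ G (jetProj m p)) (j : ℕ) :
    pdY j (G ∘ jetProj m) p = fderiv ℝ G (jetProj m p) (jetProj m (0, Pi.single j 1)) := by
  rw [pdY, ← deriv_comp_add_smul_sub hG _ (p.2 j)]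
  congr 1
  ext t
  simp only [Function.comp, ← map_smul, ← map_add]
  congr 2
  ext i
  · simp
  · rcases eq_or_ne i j with rfl | h <;> simp [Function.update, *]

theorem derivAlong_comp_jetProj (hG : DifferentiableAt ℝ G (jetProj m p)) (v : Jet) :
    derivAlong v (G ∘ jetProj m) p = fderiv ℝ G (jetProj m p) (jetProj m v) := by
  rw [derivAlong, pdX_comp_jetProj hG, tsum_eq_sum (s := Finset.range (m + 1)), jetProj_eq_sum v]
  · simp [pdY_comp_jetProj hG, smul_eq_mul]
  · intro j hj
    have hproj : jetProj m (0, Pi.single j 1) = 0 := by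
      ext i
      simp only [Finset.mem_range, not_lt] at hj
      simp only [jetProj_apply, Pi.zero_apply]
      split_ifs
      · rfl
      · exact Pi.single_eq_of_ne (by omega) _
    simp [pdY_comp_jetProj hG, hproj]

end comp_jetProj

theorem derivAlong_const (v : Jet) (c : ℝ) (p : Jet) : derivAlong v (fun _ => c) p = 0 := by
  simp [derivAlong, pdX, pdY]

theorem Dx_const (c : ℝ) (p : Jet) : Dx (fun _ => c) p = 0 := by
  rw [Dx_eq_derivAlong, derivAlong_const]

theorem derivAlong_fst (v : Jet) (p : Jet) : derivAlong v (fun q => q.1) p = v.1 := by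
  simp [derivAlong, pdX, pdY]

theorem derivAlong_comp_snd {f : ℝ → ℝ} {p : Jet} {j : ℕ} (hf : DifferentiableAt ℝ f (p.2 j))
    (v : Jet) : derivAlong v (fun q => f (q.2 j)) p = v.2 j * deriv f (p.2 j) := by
  have hG : HasFDerivAt (fun x : Fin (j + 2) → ℝ => f (x ⟨j + 1, by omega⟩))
      (deriv f (p.2 j) • ContinuousLinearMap.proj (R := ℝ) (φ := fun _ : Fin (j + 2) => ℝ)
        ⟨j + 1, by omega⟩) (jetProj j p) := by
    have hx : HasDerivAt f (deriv f (p.2 j)) (jetProj j p ⟨j + 1, by omega⟩) := by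
      simpa [jetProj_apply] using hf.hasDerivAt
    exact hx.comp_hasFDerivAt (f := fun x : Fin (j + 2) → ℝ => x ⟨j + 1, by omega⟩) _
      (hasFDerivAt_apply _ _)
  rw [show (fun q : Jet => f (q.2 j))
      = (fun x : Fin (j + 2) → ℝ => f (x ⟨j + 1, by omega⟩)) ∘ jetProj j from rfl,
    derivAlong_comp_jetProj hG.differentiableAt, hG.fderiv]
  simp [jetProj_apply, mul_comm]

theorem derivAlong_snd (v : Jet) (j : ℕ) (p : Jet) : derivAlong v (fun q => q.2 j) p = v.2 j := by
  simpa using derivAlong_comp_snd (f := id) differentiableAt_id v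

theorem derivAlong_mul {m : ℕ} {F H : Jet → ℝ} {G K : (Fin (m + 2) → ℝ) → ℝ}
    (hFG : F = G ∘ jetProj m) (hHK : H = K ∘ jetProj m) {p : Jet}
    (hG : DifferentiableAt ℝ G (jetProj m p)) (hK : DifferentiableAt ℝ K (jetProj m p))
    (v : Jet) :
    derivAlong v (fun q => F q * H q) p = derivAlong v F p * H p + F p * derivAlong v H p := by
  subst hFG hHK
  rw [show (fun q => (G ∘ jetProj m) q * (K ∘ jetProj m) q) = (fun x => G x * K x) ∘ jetProj m
    from rfl, derivAlong_comp_jetProj (G := fun x => G x * K x) (hG.mul hK),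
    derivAlong_comp_jetProj hG, derivAlong_comp_jetProj hK, fderiv_fun_mul hG hK]
  simp only [add_apply, smul_apply, smul_eq_mul, Function.comp_apply]
  ring

def JetSmooth {E : Type*} [NormedAddCommGroup E] [NormedSpace ℝ E] (m : ℕ) (F : Jet → E) :
    Prop :=
  ∃ G : (Fin (m + 2) → ℝ) → E, ContDiff ℝ ∞ G ∧ F = G ∘ jetProj m

def jetRestrict {m n : ℕ} (h : m ≤ n) : (Fin (n + 2) → ℝ) →L[ℝ] (Fin (m + 2) → ℝ) :=
  ContinuousLinearMap.pi fun i => ContinuousLinearMap.proj (Fin.castLE (by omega) i)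

theorem jetRestrict_jetProj {m n : ℕ} (h : m ≤ n) (p : Jet) :
    jetRestrict h (jetProj n p) = jetProj m p := by
  ext i
  simp only [jetRestrict, ContinuousLinearMap.pi_apply, ContinuousLinearMap.proj_apply,
    jetProj_apply, Fin.val_castLE]

namespace JetSmooth

variable {E : Type*} [NormedAddCommGroup E] [NormedSpace ℝ E] {m n : ℕ}

theorem mono {F : Jet → E} (hF : JetSmooth m F) (h : m ≤ n) : JetSmooth n F := by
  obtain ⟨G, hG, rfl⟩ := hF
  exact ⟨G ∘ jetRestrict h, hG.comp (jetRestrict h).contDiff,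
    by ext p; simp [jetRestrict_jetProj]⟩

theorem const (c : E) : JetSmooth m (fun _ => c) := ⟨fun _ => c, contDiff_const, rfl⟩

theorem snd {j : ℕ} (h : j ≤ m) : JetSmooth m (fun q : Jet => q.2 j) :=
  ⟨fun x => x ⟨j + 1, by omega⟩, contDiff_apply ℝ ℝ _, by ext q; simp [jetProj]⟩

theorem comp_fst_snd_zero {f : ℝ × ℝ → ℝ} (hf : ContDiff ℝ ∞ f) :
    JetSmooth 0 (fun q : Jet => f (q.1, q.2 0)) :=
  ⟨fun x => f (x 0, x 1), hf.comp ((contDiff_apply ℝ ℝ _).prodMk (contDiff_apply ℝ ℝ _)),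
    by ext q; simp [jetProj]⟩

theorem sub {F H : Jet → ℝ} (hF : JetSmooth m F) (hH : JetSmooth m H) :
    JetSmooth m (fun q => F q - H q) := by
  obtain ⟨G, hG, rfl⟩ := hF
  obtain ⟨K, hK, rfl⟩ := hH
  exact ⟨fun x => G x - K x, hG.sub hK, rfl⟩

theorem mul {F H : Jet → ℝ} (hF : JetSmooth m F) (hH : JetSmooth m H) :
    JetSmooth m (fun q => F q * H q) := by
  obtain ⟨G, hG, rfl⟩ := hF
  obtain ⟨K, hK, rfl⟩ := hH
  exact ⟨fun x => G x * K x, hG.mul hK, rfl⟩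

theorem pi {k : ℕ} {F : Jet → Fin k → ℝ} (h : ∀ i, JetSmooth m (fun q => F q i)) :
    JetSmooth m F := by
  choose G hG hF using h
  exact ⟨fun x i => G i x, contDiff_pi.2 hG, by ext q i; exact congrFun (hF i) q⟩

theorem derivAlong {F : Jet → ℝ} {W : Jet → Jet} (hF : JetSmooth m F)
    (hW : JetSmooth n (fun q => jetProj m (W q))) (h : m ≤ n) :
    JetSmooth n (fun q => _root_.derivAlong (W q) F q) := by
  obtain ⟨G, hG, rfl⟩ := hF
  obtain ⟨B, hB, hWB⟩ := hW
  refine ⟨fun x => fderiv ℝ G (jetRestrict h x) (B x),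
    ((hG.fderiv_right le_rfl).comp (jetRestrict h).contDiff).clm_apply hB, ?_⟩
  ext q
  rw [derivAlong_comp_jetProj (hG.differentiable (by simp) _)]
  simp [jetRestrict_jetProj, congrFun hWB q]

theorem jetProj_totalVec : JetSmooth (m + 1) (fun q => jetProj m (totalVec q)) := by
  refine pi fun i => ?_
  by_cases hi : (i : ℕ) = 0
  · simpa only [jetProj_apply, hi, if_true, totalVec] using const (m := m + 1) (1 : ℝ)
  · have : (fun q => jetProj m (totalVec q) i) = fun q : Jet => q.2 i := by
      ext q
      simp only [jetProj_apply, hi, if_false, totalVec]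
      rw [Nat.sub_add_cancel (Nat.pos_of_ne_zero hi)]
    rw [this]
    exact snd (by omega)

theorem Dx {F : Jet → ℝ} (hF : JetSmooth m F) : JetSmooth (m + 1) (Dx F) := by
  simpa only [← Dx_eq_derivAlong] using hF.derivAlong jetProj_totalVec (Nat.le_succ m)

variable {ξ η : ℝ × ℝ → ℝ}

theorem etaCoef (hξ : ContDiff ℝ ∞ ξ) (hη : ContDiff ℝ ∞ η) :
    ∀ j, JetSmooth j (_root_.etaCoef ξ η j)
  | 0 => comp_fst_snd_zero hη
  | j + 1 => ((etaCoef hξ hη j).Dx).sub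
      ((snd le_rfl).mul ((comp_fst_snd_zero hξ).Dx.mono (by omega)))

theorem jetProj_prolongVec (hξ : ContDiff ℝ ∞ ξ) (hη : ContDiff ℝ ∞ η) :
    JetSmooth m (fun q => jetProj m (prolongVec ξ η q)) := by
  refine pi fun i => ?_
  by_cases hi : (i : ℕ) = 0
  · simpa only [jetProj_apply, hi, if_true, prolongVec]
      using (comp_fst_snd_zero hξ).mono (Nat.zero_le m)
  · simpa only [jetProj_apply, hi, if_false, prolongVec]
      using (etaCoef hξ hη _).mono (by omega)

end JetSmooth

def derivAlongVec (v : Jet) (W : Jet → Jet) (p : Jet) : Jet :=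
  (derivAlong v (fun q => (W q).1) p, fun j => derivAlong v (fun q => (W q).2 j) p)

theorem jetProj_derivAlongVec (m : ℕ) (v : Jet) (W : Jet → Jet) (p : Jet) :
    jetProj m (derivAlongVec v W p) = fun i => derivAlong v (fun q => jetProj m (W q) i) p := by
  ext i
  by_cases hi : (i : ℕ) = 0 <;> simp only [jetProj_apply, hi, if_true, if_false, derivAlongVec]

theorem derivAlong_derivAlong {m n : ℕ} (h : m ≤ n) {G : (Fin (m + 2) → ℝ) → ℝ}
    (hG : ContDiff ℝ ∞ G) {W : Jet → Jet} (hW : JetSmooth n (fun q => jetProj m (W q)))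
    (v p : Jet) :
    derivAlong v (fun q => derivAlong (W q) (G ∘ jetProj m) q) p =
      fderiv ℝ (fderiv ℝ G) (jetProj m p) (jetProj m v) (jetProj m (W p))
        + fderiv ℝ G (jetProj m p) (jetProj m (derivAlongVec v W p)) := by
  obtain ⟨B, hB, hWB⟩ := hW
  have hG1 : Differentiable ℝ G := hG.differentiable (by simp)
  have hG2 : Differentiable ℝ (fderiv ℝ G) :=
    (hG.fderiv_right (m := ∞) le_rfl).differentiable (by simp)
  have hB1 : Differentiable ℝ B := hB.differentiable (by simp)
  have hΦ : (fun q => derivAlong (W q) (G ∘ jetProj m) q)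
      = (fun x => fderiv ℝ G (jetRestrict h x) (B x)) ∘ jetProj n := by
    ext q
    simp [derivAlong_comp_jetProj (hG1 _), jetRestrict_jetProj, congrFun hWB q]
  have hBv : fderiv ℝ B (jetProj n p) (jetProj n v) = jetProj m (derivAlongVec v W p) := by
    ext i
    have hi : (fun q => jetProj m (W q) i) = (fun x => B x i) ∘ jetProj n := by
      ext q; exact congrFun (congrFun hWB q) i
    rw [jetProj_derivAlongVec]
    change _ = derivAlong v (fun q => jetProj m (W q) i) p
    rw [hi, derivAlong_comp_jetProj (differentiableAt_pi.1 (hB1 _) i), fderiv_apply (hB1 _)]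
    rfl
  have hρ : fderiv ℝ (fun x => fderiv ℝ G (jetRestrict h x)) (jetProj n p)
      = (fderiv ℝ (fderiv ℝ G) (jetProj m p)).comp (jetRestrict h) := by
    rw [show (fun x => fderiv ℝ G (jetRestrict h x)) = fderiv ℝ G ∘ jetRestrict h from rfl,
      fderiv_comp _ (hG2 _) (jetRestrict h).differentiableAt, ContinuousLinearMap.fderiv,
      jetRestrict_jetProj]
  have hBp : B (jetProj n p) = jetProj m (W p) := (congrFun hWB p).symm
  rw [hΦ, derivAlong_comp_jetProj (by fun_prop), fderiv_clm_apply (by fun_prop) (by fun_prop)]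
  simp [hBv, hρ, hBp, jetRestrict_jetProj, add_comm]

theorem prolong_Dx {ξ η : ℝ × ℝ → ℝ} (hξ : ContDiff ℝ ∞ ξ) (hη : ContDiff ℝ ∞ η) {m : ℕ}
    {F : Jet → ℝ} (hF : JetSmooth m F) (p : Jet) :
    prolong ξ η (Dx F) p
      = Dx (prolong ξ η F) p - Dx (fun q => ξ (q.1, q.2 0)) p * Dx F p := by
  obtain ⟨G, hG, rfl⟩ := hF
  have hbracket : derivAlongVec (prolongVec ξ η p) totalVec p
      = derivAlongVec (totalVec p) (prolongVec ξ η) p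
        - Dx (fun q => ξ (q.1, q.2 0)) p • totalVec p := by
    ext j
    · simp [derivAlongVec, totalVec, derivAlong_const, prolongVec, Dx_eq_derivAlong]
    · simp [derivAlongVec, totalVec, derivAlong_snd, prolongVec, etaCoef_succ, Dx_eq_derivAlong,
        mul_comm]
  have hDx : Dx (G ∘ jetProj m) = fun q => derivAlong (totalVec q) (G ∘ jetProj m) q :=
    funext (Dx_eq_derivAlong _)
  rw [Dx_eq_derivAlong (G ∘ jetProj m) p, derivAlong_comp_jetProj (hG.differentiable (by simp) _),
    prolong_eq_derivAlong, hDx,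
    derivAlong_derivAlong (Nat.le_succ m) hG JetSmooth.jetProj_totalVec,
    Dx_eq_derivAlong (prolong ξ η _),
    show prolong ξ η (G ∘ jetProj m) = fun q => derivAlong (prolongVec ξ η q) (G ∘ jetProj m) q
      from rfl, derivAlong_derivAlong le_rfl hG (JetSmooth.jetProj_prolongVec hξ hη), hbracket,
    (hG.contDiffAt.isSymmSndFDerivAt (by simp; exact WithTop.coe_le_coe.2 le_top)).eq]
  simp only [map_sub, map_smul, smul_eq_mul]
  ring

theorem prolong_mul_Dx_eq_zero {ξ η : ℝ × ℝ → ℝ} (hξ : ContDiff ℝ ∞ ξ) (hη : ContDiff ℝ ∞ η)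
    {m : ℕ} {F μ : Jet → ℝ} (hF : JetSmooth m F) (hXF : ∀ q, prolong ξ η F q = 0)
    {M : (Fin (m + 1 + 2) → ℝ) → ℝ} (hμM : μ = M ∘ jetProj (m + 1)) {p : Jet}
    (hM : DifferentiableAt ℝ M (jetProj (m + 1) p))
    (hXμ : prolong ξ η μ p = Dx (fun q => ξ (q.1, q.2 0)) p * μ p) :
    prolong ξ η (fun q => μ q * Dx F q) p = 0 := by
  obtain ⟨D, hD, hDF⟩ := hF.Dx
  calc prolong ξ η (fun q => μ q * Dx F q) p
      = prolong ξ η μ p * Dx F p + μ p * prolong ξ η (Dx F) p :=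
        derivAlong_mul hμM hDF hM (hD.differentiable (by simp) _) (prolongVec ξ η p)
    _ = μ p * Dx (prolong ξ η F) p := by rw [hXμ, prolong_Dx hξ hη hF]; ring
    _ = 0 := by rw [funext hXF, Dx_const, mul_zero]

theorem prolong_one_add_sq_div {ξ η : ℝ × ℝ → ℝ} {p : Jet} (hp : p.2 2 ≠ 0) :
    prolong ξ η (fun q => (1 + q.2 1 ^ 2) / q.2 2) p
      = etaCoef ξ η 1 p * (2 * p.2 1 / p.2 2)
        - etaCoef ξ η 2 p * ((1 + p.2 1 ^ 2) / p.2 2 ^ 2) := by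
  have hp' : jetProj 2 p 3 ≠ 0 := by simpa [jetProj_apply] using hp
  simp only [div_eq_mul_inv, prolong_eq_derivAlong]
  rw [derivAlong_mul (F := fun q => 1 + q.2 1 ^ 2) (H := fun q => (q.2 2)⁻¹)
      (G := fun x => 1 + x 2 ^ 2) (K := fun x => (x 3)⁻¹) rfl rfl (by fun_prop)
      (by fun_prop (disch := exact hp')),
    derivAlong_comp_snd (f := fun t => 1 + t ^ 2) (by fun_prop),
    derivAlong_comp_snd (f := fun t => t⁻¹) (by fun_prop (disch := exact hp))]
  have hd1 : deriv (fun t : ℝ => 1 + t ^ 2) (p.2 1) = 2 * p.2 1 := by simp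
  have hd2 : deriv (fun t : ℝ => t⁻¹) (p.2 2) = -(p.2 2 ^ 2)⁻¹ := by simp
  rw [hd1, hd2]
  simp only [prolongVec]
  field_simp
  ring

theorem etaCoef_const_succ (a b : ℝ) :
    ∀ j, etaCoef (fun _ => a) (fun _ => b) (j + 1) = fun _ => 0
  | 0 => funext fun p => by simp [etaCoef, Dx_const]
  | j + 1 => funext fun p => by rw [etaCoef_succ, etaCoef_const_succ a b j]; simp [Dx_const]

theorem Dx_neg_snd_zero (p : Jet) : Dx (fun q => -q.2 0) p = -p.2 1 := by
  rw [Dx_eq_derivAlong, derivAlong_comp_snd (f := fun t => -t) (by fun_prop)]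
  simp [totalVec]

theorem etaCoef_rotation_one (p : Jet) :
    etaCoef (fun v => -v.2) (fun v => v.1) 1 p = 1 + p.2 1 ^ 2 := by
  rw [etaCoef_succ, Dx_neg_snd_zero, Dx_eq_derivAlong]
  simp only [etaCoef]
  rw [derivAlong_fst]
  simp only [totalVec]
  ring

theorem etaCoef_rotation_two (p : Jet) :
    etaCoef (fun v => -v.2) (fun v => v.1) 2 p = 3 * p.2 1 * p.2 2 := by
  rw [etaCoef_succ, funext etaCoef_rotation_one, Dx_neg_snd_zero, Dx_eq_derivAlong,
    derivAlong_comp_snd (f := fun t => 1 + t ^ 2) (by fun_prop)]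
  have hd : deriv (fun t : ℝ => 1 + t ^ 2) (p.2 1) = 2 * p.2 1 := by simp
  rw [hd]
  simp only [totalVec]
  ring

theorem stmt_1_general (k : ℕ) (G : (Fin (k + 2) → ℝ) → ℝ)
    (hG : ContDiff ℝ (⊤ : ℕ∞) G) (F : Jet → ℝ) (hF : F = ofFin k G)
    (h1 : ∀ p : Jet, prolong (fun _ => 1) (fun _ => 0) F p = 0)
    (h2 : ∀ p : Jet, prolong (fun _ => 0) (fun _ => 1) F p = 0)
    (h3 : ∀ p : Jet, prolong (fun v => -v.2) (fun v => v.1) F p = 0) :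
    ∀ p : Jet, p.2 2 ≠ 0 →
      prolong (fun _ => 1) (fun _ => 0)
          (fun q => (1 + (q.2 1) ^ 2) / q.2 2 * Dx F q) p = 0 ∧
      prolong (fun _ => 0) (fun _ => 1)
          (fun q => (1 + (q.2 1) ^ 2) / q.2 2 * Dx F q) p = 0 ∧
      prolong (fun v => -v.2) (fun v => v.1)
          (fun q => (1 + (q.2 1) ^ 2) / q.2 2 * Dx F q) p = 0 := by
  intro p hp
  have hFs : JetSmooth (k + 1) F := JetSmooth.mono ⟨G, hG, hF⟩ (Nat.le_succ k)
  let M : (Fin (k + 1 + 1 + 2) → ℝ) → ℝ := fun x => (1 + x ⟨2, by omega⟩ ^ 2) / x ⟨3, by omega⟩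
  have hμM : (fun q : Jet => (1 + q.2 1 ^ 2) / q.2 2) = M ∘ jetProj (k + 1 + 1) := rfl
  have hM : DifferentiableAt ℝ M (jetProj (k + 1 + 1) p) := by
    have : jetProj (k + 1 + 1) p ⟨3, by omega⟩ ≠ 0 := hp
    fun_prop (disch := exact this)
  refine ⟨prolong_mul_Dx_eq_zero contDiff_const contDiff_const hFs h1 hμM hM ?_,
    prolong_mul_Dx_eq_zero contDiff_const contDiff_const hFs h2 hμM hM ?_,
    prolong_mul_Dx_eq_zero (by fun_prop) (by fun_prop) hFs h3 hμM hM ?_⟩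
  · simp [prolong_one_add_sq_div hp, etaCoef_const_succ, Dx_const]
  · simp [prolong_one_add_sq_div hp, etaCoef_const_succ, Dx_const]
  · simp only [prolong_one_add_sq_div hp, etaCoef_rotation_one, etaCoef_rotation_two,
      Dx_neg_snd_zero]
    field_simp
    ring

/-- If a smooth function `F` of the `k`-jet space (`k ≥ 1`) is annihilated by the
prolongations of the three generators of `se(2)`, then so is
`𝔇F = ((1+y₁²)/y₂)·D_xF` on the open set `{y₂ ≠ 0}`: the invariant derivation `𝔇`
maps SE(2)-invariant jet functions to SE(2)-invariant jet functions. -/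
theorem stmt_1 (k : ℕ) (hk : 1 ≤ k) (G : (Fin (k + 2) → ℝ) → ℝ)
    (hG : ContDiff ℝ (⊤ : ℕ∞) G) (F : Jet → ℝ) (hF : F = ofFin k G)
    (h1 : ∀ p : Jet, prolong (fun _ => 1) (fun _ => 0) F p = 0)
    (h2 : ∀ p : Jet, prolong (fun _ => 0) (fun _ => 1) F p = 0)
    (h3 : ∀ p : Jet, prolong (fun v => -v.2) (fun v => v.1) F p = 0) :
    ∀ p : Jet, p.2 2 ≠ 0 →
      prolong (fun _ => 1) (fun _ => 0)
          (fun q => (1 + (q.2 1) ^ 2) / q.2 2 * Dx F q) p = 0 ∧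
      prolong (fun _ => 0) (fun _ => 1)
          (fun q => (1 + (q.2 1) ^ 2) / q.2 2 * Dx F q) p = 0 ∧
      prolong (fun v => -v.2) (fun v => v.1)
          (fun q => (1 + (q.2 1) ^ 2) / q.2 2 * Dx F q) p = 0 :=
  stmt_1_general k G hG F hF h1 h2 h3
end
end

section
/- Let I ⊆ ℝ be a nonempty open interval and y : I → ℝ a C³ function. Then (1 + y'(x)²)·y'''(x) = 3·y'(x)·y''(x)² for all x ∈ I if and only if the graph {(x, y(x)) : x ∈ I} is contained in a line or in a circle of ℝ² (i.e., there exist α, β ∈ ℝ with y(x) = αx + β on I, or there exist a center (a,b) ∈ ℝ² and radius r > 0 with (x − a)² + (y(x) − b)² = r² on I). This third-order ODE is the vanishing locus of the Möbius relative invariant W = ((1+y₁²)y₃ − 3y₁y₂²)/(1+y₁²)³, whose zero set consists exactly of the singular extremals of Möbius-invariant variational problems in the plane. -/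
/-!
The derivatives of the squared curvature `y''² / (1 + y'²)³` and of both coordinates of the
centre of curvature `(x - y' w, y + w)`, `w = (1 + y'²) / y''`, are multiples of
`(1 + y'²) y''' - 3 y' y''²`. So along a solution the curvature is constant: either `y'' ≡ 0` and
the graph is a line, or `y''` never vanishes, the centre of curvature is a fixed point and the
graph stays at the constant distance `(1 + y'²)^(3/2) / |y''|` from it. Conversely,
differentiating `(x - a)² + (y - b)² = r²` three times and eliminating `y - b` gives the equation.
-/

open Filter

theorem exists_eqOn_const_of_hasDerivAt_zero {E : Type*} [NormedAddCommGroup E]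
    [NormedSpace ℝ E] {I : Set ℝ} {f : ℝ → E} (hI : IsOpen I) (hconn : IsPreconnected I)
    (hf : ∀ x ∈ I, HasDerivAt f 0 x) : ∃ c, ∀ x ∈ I, f x = c :=
  hI.exists_is_const_of_deriv_eq_zero hconn
    (fun x hx => (hf x hx).differentiableAt.differentiableWithinAt) fun x hx => (hf x hx).deriv

theorem HasDerivAt.eq_of_eqOn {I : Set ℝ} {f g : ℝ → ℝ} {f' g' x : ℝ}
    (hf : HasDerivAt f f' x) (hg : HasDerivAt g g' x) (hI : IsOpen I) (hx : x ∈ I)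
    (hfg : ∀ t ∈ I, f t = g t) : f' = g' :=
  hf.unique (hg.congr_of_eventuallyEq (eventuallyEq_of_mem (hI.mem_nhds hx) hfg))

noncomputable def curvatureSq (y' y'' : ℝ → ℝ) (x : ℝ) : ℝ :=
  y'' x ^ 2 / (1 + y' x ^ 2) ^ 3

noncomputable def centerOfCurvature (y y' y'' : ℝ → ℝ) (x : ℝ) : ℝ × ℝ :=
  (x - y' x * ((1 + y' x ^ 2) / y'' x), y x + (1 + y' x ^ 2) / y'' x)

section Derivatives

variable {y y' y'' : ℝ → ℝ} {x y''' : ℝ}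

theorem hasDerivAt_curvatureSq (hy' : HasDerivAt y' (y'' x) x) (hy'' : HasDerivAt y'' y''' x) :
    HasDerivAt (curvatureSq y' y'')
      (2 * y'' x * ((1 + y' x ^ 2) * y''' - 3 * y' x * y'' x ^ 2) / (1 + y' x ^ 2) ^ 4) x := by
  have hden : (1 + y' x ^ 2) ^ 3 ≠ 0 := by positivity
  refine ((hy''.fun_pow 2).div (((hy'.fun_pow 2).const_add 1).fun_pow 3) hden).congr_deriv ?_
  field_simp
  ring

theorem hasDerivAt_centerOfCurvature (hy : HasDerivAt y (y' x) x) (hy' : HasDerivAt y' (y'' x) x)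
    (hy'' : HasDerivAt y'' y''' x) (hx : y'' x ≠ 0) :
    HasDerivAt (centerOfCurvature y y' y'')
      ((((1 + y' x ^ 2) * y''' - 3 * y' x * y'' x ^ 2) / y'' x ^ 2) • (y' x, (-1 : ℝ))) x := by
  have hw := ((hy'.fun_pow 2).const_add 1).fun_div hy'' hx
  refine (((hasDerivAt_id x).sub (hy'.mul hw)).prodMk (hy.add hw)).congr_deriv ?_
  ext <;> simp <;> field_simp <;> ring

theorem dist_centerOfCurvature_sq :
    (x - (centerOfCurvature y y' y'' x).1) ^ 2 + (y x - (centerOfCurvature y y' y'' x).2) ^ 2 =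
      (curvatureSq y' y'' x)⁻¹ := by
  by_cases hx : y'' x = 0
  · simp [centerOfCurvature, curvatureSq, hx]
  · simp only [centerOfCurvature, curvatureSq]
    field_simp
    ring

end Derivatives

section GraphODE

variable {I : Set ℝ} {y y' y'' y''' : ℝ → ℝ}

theorem exists_eqOn_affine_of_second_deriv_eq_zero (hI : IsOpen I) (hconn : IsPreconnected I)
    (hy : ∀ x ∈ I, HasDerivAt y (y' x) x) (hy' : ∀ x ∈ I, HasDerivAt y' (y'' x) x)
    (h0 : ∀ x ∈ I, y'' x = 0) : ∃ α β : ℝ, ∀ x ∈ I, y x = α * x + β := by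
  obtain ⟨α, hα⟩ :=
    exists_eqOn_const_of_hasDerivAt_zero hI hconn fun x hx => h0 x hx ▸ hy' x hx
  obtain ⟨β, hβ⟩ := exists_eqOn_const_of_hasDerivAt_zero hI hconn fun x hx => by
    simpa [hα x hx] using (hy x hx).fun_sub ((hasDerivAt_id x).const_mul α)
  exact ⟨α, β, fun x hx => by linear_combination hβ x hx⟩

theorem exists_eqOn_circle_of_mobius_ode (hI : IsOpen I) (hconn : IsPreconnected I)
    (hy : ∀ x ∈ I, HasDerivAt y (y' x) x) (hy' : ∀ x ∈ I, HasDerivAt y' (y'' x) x)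
    (hy'' : ∀ x ∈ I, HasDerivAt y'' (y''' x) x)
    (hode : ∀ x ∈ I, (1 + y' x ^ 2) * y''' x = 3 * y' x * y'' x ^ 2)
    {x₀ : ℝ} (hx₀ : x₀ ∈ I) (hne : y'' x₀ ≠ 0) :
    ∃ a b r : ℝ, 0 < r ∧ ∀ x ∈ I, (x - a) ^ 2 + (y x - b) ^ 2 = r ^ 2 := by
  have hres : ∀ x ∈ I, (1 + y' x ^ 2) * y''' x - 3 * y' x * y'' x ^ 2 = 0 :=
    fun x hx => sub_eq_zero.2 (hode x hx)
  obtain ⟨κ, hκ⟩ := exists_eqOn_const_of_hasDerivAt_zero hI hconn fun x hx => by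
    simpa [hres x hx] using hasDerivAt_curvatureSq (hy' x hx) (hy'' x hx)
  have hκ_pos : 0 < κ := hκ x₀ hx₀ ▸ by unfold curvatureSq; positivity
  have hne_all : ∀ x ∈ I, y'' x ≠ 0 := fun x hx h => by
    simpa [curvatureSq, h, hκ_pos.ne] using hκ x hx
  obtain ⟨⟨a, b⟩, hc⟩ := exists_eqOn_const_of_hasDerivAt_zero hI hconn fun x hx => by
    simpa [hres x hx] using
      hasDerivAt_centerOfCurvature (hy x hx) (hy' x hx) (hy'' x hx) (hne_all x hx)
  refine ⟨a, b, √κ⁻¹, by positivity, fun x hx => ?_⟩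
  rw [Real.sq_sqrt (inv_nonneg.2 hκ_pos.le), ← hκ x hx, ← dist_centerOfCurvature_sq, hc x hx]

theorem mobius_ode_of_eqOn_affine (hI : IsOpen I) (hy : ∀ x ∈ I, HasDerivAt y (y' x) x)
    (hy' : ∀ x ∈ I, HasDerivAt y' (y'' x) x) (hy'' : ∀ x ∈ I, HasDerivAt y'' (y''' x) x)
    {α β : ℝ} (hline : ∀ x ∈ I, y x = α * x + β) :
    ∀ x ∈ I, (1 + y' x ^ 2) * y''' x = 3 * y' x * y'' x ^ 2 := by
  have h₁ : ∀ x ∈ I, y' x = α := fun x hx => by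
    simpa using (hy x hx).eq_of_eqOn (((hasDerivAt_id x).const_mul α).add_const β) hI hx hline
  have h₂ : ∀ x ∈ I, y'' x = 0 := fun x hx =>
    (hy' x hx).eq_of_eqOn (hasDerivAt_const x α) hI hx h₁
  have h₃ : ∀ x ∈ I, y''' x = 0 := fun x hx =>
    (hy'' x hx).eq_of_eqOn (hasDerivAt_const x 0) hI hx h₂
  intro x hx
  simp [h₂ x hx, h₃ x hx]

theorem mobius_ode_of_eqOn_circle (hI : IsOpen I) (hy : ∀ x ∈ I, HasDerivAt y (y' x) x)
    (hy' : ∀ x ∈ I, HasDerivAt y' (y'' x) x) (hy'' : ∀ x ∈ I, HasDerivAt y'' (y''' x) x)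
    {a b r : ℝ} (hcirc : ∀ x ∈ I, (x - a) ^ 2 + (y x - b) ^ 2 = r ^ 2) :
    ∀ x ∈ I, (1 + y' x ^ 2) * y''' x = 3 * y' x * y'' x ^ 2 := by
  have e₁ : ∀ x ∈ I, (x - a) + (y x - b) * y' x = 0 := fun x hx => by
    have := ((((hasDerivAt_id x).sub_const a).pow 2).add
      (((hy x hx).sub_const b).pow 2)).eq_of_eqOn (hasDerivAt_const x (r ^ 2)) hI hx hcirc
    norm_num at this
    linear_combination this / 2
  have e₂ : ∀ x ∈ I, 1 + y' x ^ 2 + (y x - b) * y'' x = 0 := fun x hx => by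
    have := (((hasDerivAt_id x).sub_const a).add
      (((hy x hx).sub_const b).mul (hy' x hx))).eq_of_eqOn (hasDerivAt_const x 0) hI hx e₁
    linear_combination this
  have e₃ : ∀ x ∈ I, 3 * y' x * y'' x + (y x - b) * y''' x = 0 := fun x hx => by
    have := ((((hy' x hx).pow 2).const_add 1).add
      (((hy x hx).sub_const b).mul (hy'' x hx))).eq_of_eqOn (hasDerivAt_const x 0) hI hx e₂
    norm_num at this
    linear_combination this
  intro x hx
  linear_combination y''' x * e₂ x hx - y'' x * e₃ x hx

end GraphODE

theorem stmt_6_general (I : Set ℝ) (hI : IsOpen I)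
    (hconn : IsPreconnected I) (y : ℝ → ℝ) (hy : ContDiffOn ℝ 3 y I) :
    (∀ x ∈ I, (1 + (deriv y x) ^ 2) * deriv (deriv (deriv y)) x =
        3 * deriv y x * (deriv (deriv y) x) ^ 2) ↔
      ((∃ α β : ℝ, ∀ x ∈ I, y x = α * x + β) ∨
        (∃ a b r : ℝ, 0 < r ∧ ∀ x ∈ I, (x - a) ^ 2 + (y x - b) ^ 2 = r ^ 2)) := by
  have hasDerivAt_deriv {f : ℝ → ℝ} (hf : DifferentiableOn ℝ f I) (x : ℝ) (hx : x ∈ I) :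
      HasDerivAt f (deriv f x) x :=
    (hf.differentiableAt (hI.mem_nhds hx)).hasDerivAt
  have hy' : ContDiffOn ℝ 2 (deriv y) I := hy.deriv_of_isOpen hI (by norm_num)
  have hy'' : ContDiffOn ℝ 1 (deriv (deriv y)) I := hy'.deriv_of_isOpen hI (by norm_num)
  have h₀ := hasDerivAt_deriv (hy.differentiableOn (by norm_num))
  have h₁ := hasDerivAt_deriv (hy'.differentiableOn (by norm_num))
  have h₂ := hasDerivAt_deriv (hy''.differentiableOn (by norm_num))
  constructor
  · intro hode
    by_cases h0 : ∀ x ∈ I, deriv (deriv y) x = 0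
    · exact .inl (exists_eqOn_affine_of_second_deriv_eq_zero hI hconn h₀ h₁ h0)
    · push Not at h0
      obtain ⟨x₀, hx₀, hne⟩ := h0
      exact .inr (exists_eqOn_circle_of_mobius_ode hI hconn h₀ h₁ h₂ hode hx₀ hne)
  · rintro (⟨α, β, hline⟩ | ⟨a, b, r, -, hcirc⟩)
    · exact mobius_ode_of_eqOn_affine hI h₀ h₁ h₂ hline
    · exact mobius_ode_of_eqOn_circle hI h₀ h₁ h₂ hcirc

/-- A C³ graph `y = y(x)` over a nonempty open interval `I` satisfies the
third-order ODE `(1 + y'²)·y''' = 3·y'·y''²` (the vanishing of the Möbius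
relative invariant `W = ((1+y₁²)y₃ − 3y₁y₂²)/(1+y₁²)³`) iff its graph is
contained in a line or in a circle of the plane. -/
theorem stmt_6 (I : Set ℝ) (hI : IsOpen I) (hne : I.Nonempty)
    (hconn : IsPreconnected I) (y : ℝ → ℝ) (hy : ContDiffOn ℝ 3 y I) :
    (∀ x ∈ I, (1 + (deriv y x) ^ 2) * deriv (deriv (deriv y)) x =
        3 * deriv y x * (deriv (deriv y) x) ^ 2) ↔
      ((∃ α β : ℝ, ∀ x ∈ I, y x = α * x + β) ∨
        (∃ a b r : ℝ, 0 < r ∧ ∀ x ∈ I, (x - a) ^ 2 + (y x - b) ^ 2 = r ^ 2)) :=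
  stmt_6_general I hI hconn y hy
end

section
/- Consider the eight vector fields ∂_x, ∂_{y₀}, x∂_x, x∂_{y₀}, y₀∂_x, y₀∂_{y₀}, x(x∂_x + y₀∂_{y₀}), y₀(x∂_x + y₀∂_{y₀}) generating the projective algebra sl(3,ℝ) acting on the plane. Then R₂ := y₂, R₅ := 9y₂²y₅ − 45y₂y₃y₄ + 40y₃³ and R₇ := y₂⁸Θ₈ (which is a polynomial in the jet variables) are polynomial relative invariants: for each generator X there exist polynomial functions w₂, w₅, w₇ of (x, y₀, y₁) such that X^{(2)}R₂ = w₂·R₂, X^{(5)}R₅ = w₅·R₅ and X^{(7)}R₇ = w₇·R₇. Moreover, their weights with respect to the Cartan pair (H₁, H₂) := (−x∂_x, y₀∂_{y₀}) are (2,1), (9,3) and (24,8) respectively; e.g., H₁^{(7)}R₇ = 24·R₇ and H₂^{(7)}R₇ = 8·R₇. -/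
noncomputable section

/-- `Θ₃ = (9y₂²y₅ − 45y₂y₃y₄ + 40y₃³)/y₂³`. -/
def Theta3 (p : Jet) : ℝ :=
  (9 * (p.2 2) ^ 2 * p.2 5 - 45 * p.2 2 * p.2 3 * p.2 4 + 40 * (p.2 3) ^ 3) /
    (p.2 2) ^ 3

/-- `Θ₈ = 6Θ₃·D_x²Θ₃ − 7(D_xΘ₃)² + 27Θ₃²(4y₃²/(9y₂²) − y₄/(3y₂))`. -/
def Theta8 (p : Jet) : ℝ :=
  6 * Theta3 p * (Dx^[2] Theta3) p - 7 * (Dx Theta3 p) ^ 2 +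
    27 * (Theta3 p) ^ 2 *
      (4 * (p.2 3) ^ 2 / (9 * (p.2 2) ^ 2) - p.2 4 / (3 * p.2 2))

/-- The eight generators `∂_x, ∂_{y₀}, x∂_x, x∂_{y₀}, y₀∂_x, y₀∂_{y₀},
x(x∂_x+y₀∂_{y₀}), y₀(x∂_x+y₀∂_{y₀})` of the projective algebra `sl(3,ℝ)`
acting on the plane, as pairs `(ξ, η)`. -/
def projGens : List ((ℝ × ℝ → ℝ) × (ℝ × ℝ → ℝ)) :=
  [(fun _ => 1, fun _ => 0),
   (fun _ => 0, fun _ => 1),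
   (fun v => v.1, fun _ => 0),
   (fun _ => 0, fun v => v.1),
   (fun v => v.2, fun _ => 0),
   (fun _ => 0, fun v => v.2),
   (fun v => v.1 * v.1, fun v => v.1 * v.2),
   (fun v => v.2 * v.1, fun v => v.2 * v.2)]

/-- The relative invariant `R₂ = y₂`. -/
def R2 (p : Jet) : ℝ := p.2 2

/-- The relative invariant `R₅ = 9y₂²y₅ − 45y₂y₃y₄ + 40y₃³`. -/
def R5 (p : Jet) : ℝ :=
  9 * (p.2 2) ^ 2 * p.2 5 - 45 * p.2 2 * p.2 3 * p.2 4 + 40 * (p.2 3) ^ 3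

/-- The relative invariant `R₇ = y₂⁸Θ₈`. -/
def R7 (p : Jet) : ℝ := (p.2 2) ^ 8 * Theta8 p

/-- First Cartan generator `H₁ = −x∂_x`. -/
def H1 : (ℝ × ℝ → ℝ) × (ℝ × ℝ → ℝ) := (fun v => -v.1, fun _ => 0)

/-- Second Cartan generator `H₂ = y₀∂_{y₀}`. -/
def H2 : (ℝ × ℝ → ℝ) × (ℝ × ℝ → ℝ) := (fun _ => 0, fun v => v.2)

/-!
The prolongation of `X = ξ∂ₓ + η∂_{y₀}` acts on polynomial jet functions as a derivation `P`
with `[P, Dₓ] = -(Dₓξ) Dₓ`, so that `P y_{j+1} = Dₓ(P y_j) - y_{j+1} Dₓξ`. For every element of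
the projective algebra, `P y₂ = a y₂` with `a = 2α - 3β` and
`Dₓξ = λ = 2β - α`, for polynomials `α, β, ν` in `(x, y₀, y₁)` with `Dₓα = -3ν y₂`,
`Dₓ²β = -ν y₃` and `Dₓ²ν = 0`.
From these identities alone, a computation in an arbitrary differential ring shows that `R₅` has
weight `3(a - λ)` and that the expression `y₂⁸Θ₈`, built from `y₂` and `R₅` by `Dₓ`, has weight
`8(a - λ)`. On `y₂ ≠ 0` the function `R₇` agrees with that polynomial, and the prolongation only
sees a function near the point.
-/

open MvPolynomial Filter Topology

theorem MvPolynomial.derivation_eq_sum_pderiv {σ R : Type*} [CommSemiring R]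
    (D : Derivation R (MvPolynomial σ R) (MvPolynomial σ R)) {s : Finset σ}
    {f : MvPolynomial σ R} (hf : f.vars ⊆ s) :
    D f = ∑ i ∈ s, D (X i) * pderiv i f := by
  classical
  let D' : Derivation R (MvPolynomial σ R) (MvPolynomial σ R) := ∑ i ∈ s, D (X i) • pderiv i
  have hD' : ∀ g, D' g = ∑ i ∈ s, D (X i) * pderiv i g := fun g => by
    rw [← Derivation.coeFnAddMonoidHom_apply, map_sum, Finset.sum_apply]
    rfl
  rw [← hD']
  refine derivation_eq_of_forall_mem_vars fun i hi => ?_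
  rw [hD']
  simp [pderiv_X, Pi.single_apply, hf hi]

theorem MvPolynomial.hasDerivAt_eval_update {σ : Type*} [DecidableEq σ]
    (P : MvPolynomial σ ℝ) (v : σ → ℝ) (i : σ) (t : ℝ) :
    HasDerivAt (fun s => eval (Function.update v i s) P)
      (eval (Function.update v i t) (pderiv i P)) t := by
  induction P using MvPolynomial.induction_on with
  | C a => simpa using hasDerivAt_const t a
  | add P Q hP hQ => simpa using hP.fun_add hQ
  | mul_X P k hP =>
    have hk : HasDerivAt (fun s => Function.update v i s k)
        (eval (Function.update v i t) ((Pi.single i 1 : σ → MvPolynomial σ ℝ) k)) t := by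
      rcases eq_or_ne k i with rfl | hki
      · simpa using hasDerivAt_id' t
      · simpa [hki] using hasDerivAt_const t (v k)
    simp only [map_mul, eval_X, Derivation.leibniz, smul_eq_mul, map_add, pderiv_X]
    exact (hP.fun_mul hk).congr_deriv (by ring)

theorem MvPolynomial.hasDerivAt_div_eval_update {σ : Type*} [DecidableEq σ] (F Q : MvPolynomial σ ℝ)
    (v : σ → ℝ) (i : σ) (hQ : eval v Q ≠ 0) :
    HasDerivAt (fun t => eval (Function.update v i t) F / eval (Function.update v i t) Q)
      ((eval v (pderiv i F) * eval v Q - eval v F * eval v (pderiv i Q)) / eval v Q ^ 2)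
      (v i) := by
  have h : ∀ P : MvPolynomial σ ℝ, HasDerivAt (fun t => eval (Function.update v i t) P)
      (eval v (pderiv i P)) (v i) := fun P => by
    simpa using hasDerivAt_eval_update P v i (v i)
  simpa using (h F).fun_div (h Q) (by simpa using hQ)

theorem Derivation.map_ofNat {R A : Type*} [CommSemiring R] [CommSemiring A] [Algebra R A]
    (D : Derivation R A A) (n : ℕ) [n.AtLeastTwo] : D (no_index (OfNat.ofNat n : A)) = 0 := by
  rw [← Nat.cast_ofNat]
  exact D.map_natCast n

section RelativeInvariants

variable {R A : Type*} [CommRing R] [CommRing A] [Algebra R A] (D : Derivation R A A)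

/-- `D (F / u ^ k) = derivNum D k u F / u ^ (k + 1)`. -/
def derivNum (k : ℕ) (u F : A) : A := u * D F - k * D u * F

def relInv5 (u : A) : A := 9 * u ^ 2 * D (D (D u)) - 45 * u * D u * D (D u) + 40 * D u ^ 3

/-- For `D = Dₓ`, `u = y₂` and `R = R₅ = y₂³Θ₃`, the two `derivNum`s are `y₂⁴ DₓΘ₃` and
`y₂⁵ Dₓ²Θ₃`, and `relInv7 D u R = y₂⁸Θ₈`. -/
def relInv7 (u R : A) : A :=
  6 * R * derivNum D 4 u (derivNum D 3 u R) - 7 * derivNum D 3 u R ^ 2 +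
    3 * R ^ 2 * (4 * D u ^ 2 - 3 * u * D (D u))

variable {D} {P : Derivation R A A} {l u α β ν a : A}
  (hcomm : ∀ f, P (D f) = D (P f) - l * D f)
  (ha : a = 2 * α - 3 * β) (hl : l = 2 * β - α) (hPu : P u = a * u)
  (hα : D α = -3 * ν * u) (hβ : D (D β) = -ν * D u)
include hcomm ha hl hPu hα hβ

theorem relInv5_weight (hν : D (D ν) = 0) : P (relInv5 D u) = 3 * (a - l) * relInv5 D u := by
  subst ha hl
  simp only [relInv5, hcomm, hPu, Derivation.leibniz, Derivation.leibniz_pow, Derivation.map_add,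
    Derivation.map_sub, Derivation.map_neg, smul_eq_mul, nsmul_eq_mul, hα, hβ, hν,
    Derivation.map_ofNat, Derivation.map_zero]
  ring

theorem relInv7_weight {R₅ : A} (hR : P R₅ = 3 * (a - l) * R₅) :
    P (relInv7 D u R₅) = 8 * (a - l) * relInv7 D u R₅ := by
  subst ha hl
  simp only [relInv7, derivNum, hcomm, hPu, hR, Derivation.leibniz, Derivation.leibniz_pow,
    Derivation.map_add, Derivation.map_sub, Derivation.map_neg, smul_eq_mul, nsmul_eq_mul, hα, hβ,
    Derivation.map_ofNat, Derivation.map_zero, Nat.cast_ofNat]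
  ring

end RelativeInvariants

/-- Polynomial jet functions: `X none` is `x` and `X (some j)` is `y_j`. -/
abbrev JetPoly : Type := MvPolynomial (Option ℕ) ℝ

def jetCoord (p : Jet) : Option ℕ → ℝ := fun i => i.elim p.1 p.2

def evalJet (F : JetPoly) (p : Jet) : ℝ := eval (jetCoord p) F

theorem evalJet_mul (F G : JetPoly) (p : Jet) : evalJet (F * G) p = evalJet F p * evalJet G p :=
  map_mul _ _ _

theorem jetCoord_mk_snd (p : Jet) (t : ℝ) :
    jetCoord (t, p.2) = Function.update (jetCoord p) none t := by
  funext i; cases i <;> simp [jetCoord]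

theorem jetCoord_mk_update (p : Jet) (j : ℕ) (t : ℝ) :
    jetCoord (p.1, Function.update p.2 j t) = Function.update (jetCoord p) (some j) t := by
  funext i; cases i <;> simp [jetCoord, Function.update_apply]

theorem pdX_div (F Q : JetPoly) (p : Jet) (hQ : evalJet Q p ≠ 0) :
    pdX (fun q => evalJet F q / evalJet Q q) p =
      (evalJet (pderiv none F) p * evalJet Q p - evalJet F p * evalJet (pderiv none Q) p) /
        evalJet Q p ^ 2 := by
  unfold pdX evalJet
  simp only [jetCoord_mk_snd]
  exact (hasDerivAt_div_eval_update F Q (jetCoord p) none hQ).deriv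

theorem pdY_div (F Q : JetPoly) (j : ℕ) (p : Jet) (hQ : evalJet Q p ≠ 0) :
    pdY j (fun q => evalJet F q / evalJet Q q) p =
      (evalJet (pderiv (some j) F) p * evalJet Q p -
        evalJet F p * evalJet (pderiv (some j) Q) p) / evalJet Q p ^ 2 := by
  unfold pdY evalJet
  simp only [jetCoord_mk_update]
  exact (hasDerivAt_div_eval_update F Q (jetCoord p) (some j) hQ).deriv

def jetVectorField (c : Option ℕ → Jet → ℝ) (F : Jet → ℝ) (p : Jet) : ℝ :=
  c none p * pdX F p + ∑' j : ℕ, c (some j) p * pdY j F p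

theorem jetVectorField_div (c : Option ℕ → Jet → ℝ) (g : Option ℕ → JetPoly) (F Q : JetPoly)
    (p : Jet) (hc : ∀ i, c i p = evalJet (g i) p) (hQ : evalJet Q p ≠ 0) :
    jetVectorField c (fun q => evalJet F q / evalJet Q q) p =
      (evalJet (mkDerivation ℝ g F) p * evalJet Q p -
        evalJet F p * evalJet (mkDerivation ℝ g Q) p) / evalJet Q p ^ 2 := by
  classical
  set S := Finset.eraseNone (F.vars ∪ Q.vars)
  have hS : F.vars ∪ Q.vars ⊆ Finset.insertNone S := by
    rw [Finset.insertNone_eraseNone]; exact Finset.subset_insert _ _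
  have hsum : ∀ P : JetPoly, P.vars ⊆ F.vars ∪ Q.vars →
      evalJet (mkDerivation ℝ g P) p = c none p * evalJet (pderiv none P) p +
        ∑ j ∈ S, c (some j) p * evalJet (pderiv (some j) P) p := fun P hP => by
    rw [derivation_eq_sum_pderiv _ (hP.trans hS), Finset.sum_insertNone]
    simp [evalJet, hc, mkDerivation_X]
  unfold jetVectorField
  rw [tsum_eq_sum (s := S) fun j hj => ?_, hsum F Finset.subset_union_left,
    hsum Q Finset.subset_union_right, pdX_div F Q p hQ]
  · simp only [pdY_div F Q _ p hQ]
    set f := evalJet F p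
    set q := evalJet Q p
    have hterm : ∀ j ∈ S, c (some j) p *
        ((evalJet (pderiv (some j) F) p * q - f * evalJet (pderiv (some j) Q) p) / q ^ 2) =
        (c (some j) p * evalJet (pderiv (some j) F) p * q -
          f * (c (some j) p * evalJet (pderiv (some j) Q) p)) / q ^ 2 :=
      fun j _ => by ring
    rw [Finset.sum_congr rfl hterm, ← Finset.sum_div, Finset.sum_sub_distrib, ← Finset.sum_mul,
      ← Finset.mul_sum]
    ring
  · have hj' : some j ∉ F.vars ∪ Q.vars := fun h => hj (Finset.mem_eraseNone.2 h)
    rw [Finset.mem_union, not_or] at hj'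
    rw [pdY_div F Q j p hQ, pderiv_eq_zero_of_notMem_vars hj'.1,
      pderiv_eq_zero_of_notMem_vars hj'.2]
    simp [evalJet]

theorem jetVectorField_evalJet (c : Option ℕ → Jet → ℝ) (g : Option ℕ → JetPoly) (F : JetPoly)
    (p : Jet) (hc : ∀ i, c i p = evalJet (g i) p) :
    jetVectorField c (evalJet F) p = evalJet (mkDerivation ℝ g F) p := by
  have h := jetVectorField_div c g F 1 p hc (by simp [evalJet])
  simp only [evalJet, map_one, div_one, one_pow, mul_one, Derivation.map_one_eq_zero, map_zero,
    mul_zero, sub_zero] at h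
  exact h

theorem jetVectorField_congr (c : Option ℕ → Jet → ℝ) {F G : Jet → ℝ} {p : Jet}
    (h : F =ᶠ[𝓝 p] G) : jetVectorField c F p = jetVectorField c G p := by
  have hX : pdX F p = pdX G p := by
    refine EventuallyEq.deriv_eq ?_
    have : Tendsto (fun t : ℝ => ((t, p.2) : Jet)) (𝓝 p.1) (𝓝 p) :=
      (Continuous.prodMk_left p.2).tendsto p.1
    exact this.eventually h
  have hY : ∀ j, pdY j F p = pdY j G p := fun j => by
    refine EventuallyEq.deriv_eq ?_
    have : Tendsto (fun t : ℝ => ((p.1, Function.update p.2 j t) : Jet)) (𝓝 (p.2 j)) (𝓝 p) := by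
      have hc : Continuous fun t : ℝ => ((p.1, Function.update p.2 j t) : Jet) := by fun_prop
      simpa using hc.tendsto (p.2 j)
    exact this.eventually h
  simp only [jetVectorField, hX, hY]

theorem eventually_y2_ne_zero {p : Jet} (hp : p.2 2 ≠ 0) : ∀ᶠ q in 𝓝 p, q.2 2 ≠ 0 :=
  ((continuous_apply 2).comp continuous_snd).continuousAt.eventually_ne hp

def totalDeriv : Derivation ℝ JetPoly JetPoly :=
  mkDerivation ℝ fun i => i.elim 1 fun j => X (some (j + 1))

@[simp] theorem totalDeriv_X_none : totalDeriv (X none) = 1 := mkDerivation_X _ _ _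

@[simp] theorem totalDeriv_X_some (j : ℕ) : totalDeriv (X (some j)) = X (some (j + 1)) :=
  mkDerivation_X _ _ _

theorem Dx_eq_jetVectorField (F : Jet → ℝ) :
    Dx F = jetVectorField (fun i => evalJet (totalDeriv (X i))) F := by
  funext p
  simp [Dx, jetVectorField, evalJet, jetCoord]

theorem Dx_congr {F G : Jet → ℝ} {p : Jet} (h : F =ᶠ[𝓝 p] G) : Dx F p = Dx G p := by
  simp only [Dx_eq_jetVectorField]
  exact jetVectorField_congr _ h

theorem Dx_div (F Q : JetPoly) (p : Jet) (hQ : evalJet Q p ≠ 0) :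
    Dx (fun q => evalJet F q / evalJet Q q) p =
      (evalJet (totalDeriv F) p * evalJet Q p - evalJet F p * evalJet (totalDeriv Q) p) /
        evalJet Q p ^ 2 := by
  rw [Dx_eq_jetVectorField]
  exact jetVectorField_div _ (fun i => i.elim 1 fun j => X (some (j + 1))) F Q p
    (fun i => by rw [totalDeriv, mkDerivation_X]) hQ

theorem Dx_evalJet (F : JetPoly) : Dx (evalJet F) = evalJet (totalDeriv F) := by
  funext p
  rw [Dx_eq_jetVectorField]
  exact jetVectorField_evalJet _ (fun i => i.elim 1 fun j => X (some (j + 1))) F p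
    fun i => by rw [totalDeriv, mkDerivation_X]

theorem Dx_div_y2_pow (F : JetPoly) (k : ℕ) {p : Jet} (hp : p.2 2 ≠ 0) :
    Dx (fun q => evalJet F q / q.2 2 ^ k) p =
      evalJet (derivNum totalDeriv k (X (some 2)) F) p / p.2 2 ^ (k + 1) := by
  have hy : ∀ q : Jet, evalJet (X (some 2) ^ k) q = q.2 2 ^ k := fun q => by
    simp [evalJet, jetCoord]
  have h := Dx_div F (X (some 2) ^ k) p (by rw [hy]; exact pow_ne_zero k hp)
  simp only [hy] at h
  rw [h]
  cases k with
  | zero => field_simp; simp [derivNum, evalJet, jetCoord, mul_comm]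
  | succ m =>
    simp only [derivNum, Derivation.leibniz_pow, add_tsub_cancel_right, totalDeriv_X_some,
      nsmul_eq_mul, smul_eq_mul, evalJet, map_sub, map_mul, map_pow, map_natCast, eval_X]
    field_simp
    simp only [jetCoord, Option.elim_some]
    ring

section Prolongation

variable (ξP ηP : JetPoly)

def etaPoly : ℕ → JetPoly
  | 0 => ηP
  | j + 1 => totalDeriv (etaPoly j) - X (some (j + 1)) * totalDeriv ξP

def prolongDeriv : Derivation ℝ JetPoly JetPoly :=
  mkDerivation ℝ fun i => i.elim ξP (etaPoly ξP ηP)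

theorem prolongDeriv_X_none : prolongDeriv ξP ηP (X none) = ξP := mkDerivation_X _ _ _

theorem prolongDeriv_X_some (j : ℕ) : prolongDeriv ξP ηP (X (some j)) = etaPoly ξP ηP j :=
  mkDerivation_X _ _ _

theorem prolongDeriv_totalDeriv (F : JetPoly) :
    prolongDeriv ξP ηP (totalDeriv F) =
      totalDeriv (prolongDeriv ξP ηP F) - totalDeriv ξP * totalDeriv F := by
  have h : ⁅prolongDeriv ξP ηP, totalDeriv⁆ = -totalDeriv ξP • totalDeriv := by
    ext (_ | j)
    · simp [Derivation.commutator_apply, prolongDeriv_X_none]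
    · simp [Derivation.commutator_apply, prolongDeriv_X_some, etaPoly, mul_comm]
  have := congrArg (· F) h
  simp only [Derivation.commutator_apply, Derivation.smul_apply, smul_eq_mul] at this
  linear_combination this

variable {ξ η : ℝ × ℝ → ℝ} (hξ : ∀ q : Jet, ξ (q.1, q.2 0) = evalJet ξP q)
  (hη : ∀ q : Jet, η (q.1, q.2 0) = evalJet ηP q)
include hξ hη

theorem etaCoef_eq_evalJet (j : ℕ) : etaCoef ξ η j = evalJet (etaPoly ξP ηP j) := by
  induction j with
  | zero => funext q; exact hη q
  | succ j ih =>
    have hξ' : (fun q : Jet => ξ (q.1, q.2 0)) = evalJet ξP := funext hξ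
    funext q
    simp [etaCoef, etaPoly, ih, hξ', Dx_evalJet, evalJet, jetCoord]

theorem prolong_evalJet (F : JetPoly) (p : Jet) :
    prolong ξ η (evalJet F) p = evalJet (prolongDeriv ξP ηP F) p :=
  jetVectorField_evalJet (fun i => i.elim (fun q => ξ (q.1, q.2 0)) (etaCoef ξ η)) _ F p
    fun i => by cases i <;> simp [hξ, etaCoef_eq_evalJet ξP ηP hξ hη]

end Prolongation

theorem prolong_congr (ξ η : ℝ × ℝ → ℝ) {F G : Jet → ℝ} {p : Jet} (h : F =ᶠ[𝓝 p] G) :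
    prolong ξ η F p = prolong ξ η G p :=
  jetVectorField_congr (fun i => i.elim (fun q => ξ (q.1, q.2 0)) (etaCoef ξ η)) h

theorem R2_eq_evalJet : R2 = evalJet (X (some 2)) := by
  funext p
  simp [R2, evalJet, jetCoord]

def R5Poly : JetPoly := relInv5 totalDeriv (X (some 2))

def R7Poly : JetPoly := relInv7 totalDeriv (X (some 2)) R5Poly

theorem R5_eq_evalJet : R5 = evalJet R5Poly := by
  funext p
  simp [R5, R5Poly, relInv5, evalJet, jetCoord]

theorem Theta3_eq : Theta3 = fun q => evalJet R5Poly q / q.2 2 ^ 3 := by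
  rw [← R5_eq_evalJet]; rfl

theorem Dx_Theta3 {q : Jet} (hq : q.2 2 ≠ 0) :
    Dx Theta3 q = evalJet (derivNum totalDeriv 3 (X (some 2)) R5Poly) q / q.2 2 ^ 4 := by
  rw [Theta3_eq]; exact Dx_div_y2_pow _ 3 hq

theorem Dx_Dx_Theta3 {q : Jet} (hq : q.2 2 ≠ 0) :
    Dx (Dx Theta3) q = evalJet (derivNum totalDeriv 4 (X (some 2))
      (derivNum totalDeriv 3 (X (some 2)) R5Poly)) q / q.2 2 ^ 5 := by
  rw [Dx_congr ((eventually_y2_ne_zero hq).mono fun _ => Dx_Theta3)]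
  exact Dx_div_y2_pow _ 4 hq

theorem R7_eq_evalJet {q : Jet} (hq : q.2 2 ≠ 0) : R7 q = evalJet R7Poly q := by
  simp only [R7, Theta8, Function.iterate_succ, Function.iterate_zero, Function.comp_apply, id]
  rw [Dx_Theta3 hq, Dx_Dx_Theta3 hq, Theta3_eq]
  simp only [R7Poly, relInv7, derivNum, evalJet, map_add, map_sub, map_mul, map_pow, map_ofNat,
    Nat.cast_ofNat, Derivation.leibniz, smul_eq_mul, totalDeriv_X_some, eval_X]
  field_simp
  simp only [jetCoord, Option.elim_some]
  ring

section Projective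

/-- `c i` is the coefficient of the `i`-th generator in `projGens`. -/
def projField (c : Fin 8 → ℝ) : (ℝ × ℝ → ℝ) × (ℝ × ℝ → ℝ) :=
  (fun v => c 0 + c 2 * v.1 + c 4 * v.2 + v.1 * (c 6 * v.1 + c 7 * v.2),
   fun v => c 1 + c 3 * v.1 + c 5 * v.2 + v.2 * (c 6 * v.1 + c 7 * v.2))

/-- Functions of `(x, y₀, y₁)` as jet polynomials. -/
def toJet : MvPolynomial (Fin 3) ℝ →ₐ[ℝ] JetPoly := rename ![none, some 0, some 1]

theorem evalJet_toJet (w : MvPolynomial (Fin 3) ℝ) (p : Jet) :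
    evalJet (toJet w) p = eval ![p.1, p.2 0, p.2 1] w := by
  have h : jetCoord p ∘ ![none, some 0, some 1] = ![p.1, p.2 0, p.2 1] := by
    funext i
    fin_cases i <;> rfl
  rw [evalJet, toJet, eval_rename, h]

variable (c : Fin 8 → ℝ)

def projXi : MvPolynomial (Fin 3) ℝ :=
  C (c 0) + C (c 2) * X 0 + C (c 4) * X 1 + X 0 * (C (c 6) * X 0 + C (c 7) * X 1)

def projEta : MvPolynomial (Fin 3) ℝ :=
  C (c 1) + C (c 3) * X 0 + C (c 5) * X 1 + X 1 * (C (c 6) * X 0 + C (c 7) * X 1)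

/-! `projNu = ξ_y`, `projBeta = η_y - ξ_y y₁` and `projAlpha = 2η_y - ξ_x - 3ξ_y y₁`; then
`projLam = Dₓξ` and `projWeight = η_y - 2ξ_x - 3ξ_y y₁` is the weight of `y₂`. -/

def projNu : MvPolynomial (Fin 3) ℝ := C (c 4) + C (c 7) * X 0

def projAlpha : MvPolynomial (Fin 3) ℝ :=
  C (2 * c 5 - c 2) + C (3 * c 7) * X 1 - 3 * projNu c * X 2

def projBeta : MvPolynomial (Fin 3) ℝ :=
  C (c 5) + C (c 6) * X 0 + C (2 * c 7) * X 1 - projNu c * X 2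

def projWeight : MvPolynomial (Fin 3) ℝ := 2 * projAlpha c - 3 * projBeta c

def projLam : MvPolynomial (Fin 3) ℝ := 2 * projBeta c - projAlpha c

theorem projField_fst (q : Jet) :
    (projField c).1 (q.1, q.2 0) = evalJet (toJet (projXi c)) q := by
  rw [evalJet_toJet]
  simp [projField, projXi]

theorem projField_snd (q : Jet) :
    (projField c).2 (q.1, q.2 0) = evalJet (toJet (projEta c)) q := by
  rw [evalJet_toJet]
  simp [projField, projEta]

theorem totalDeriv_projXi : totalDeriv (toJet (projXi c)) = toJet (projLam c) := by
  simp only [toJet, projXi, projLam, projAlpha, projBeta, projNu, map_add, map_sub, map_mul,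
    map_ofNat, algHom_C, algebraMap_eq, rename_X, Matrix.cons_val, Derivation.leibniz,
    derivation_C, smul_eq_mul, totalDeriv_X_none, totalDeriv_X_some]
  ring

theorem etaPoly_two :
    etaPoly (toJet (projXi c)) (toJet (projEta c)) 2 = toJet (projWeight c) * X (some 2) := by
  simp only [etaPoly, toJet, projXi, projEta, projWeight, projAlpha, projBeta, projNu, map_add,
    map_sub, map_mul, map_ofNat, algHom_C, algebraMap_eq, rename_X, Matrix.cons_val,
    Derivation.leibniz, derivation_C, smul_eq_mul, totalDeriv_X_none, totalDeriv_X_some,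
    Derivation.map_one_eq_zero, Derivation.map_zero]
  ring

theorem totalDeriv_projAlpha :
    totalDeriv (toJet (projAlpha c)) = -3 * toJet (projNu c) * X (some 2) := by
  simp only [toJet, projAlpha, projNu, map_add, map_sub, map_mul, map_ofNat, algHom_C,
    algebraMap_eq, rename_X, Matrix.cons_val, Derivation.leibniz, derivation_C,
    Derivation.map_ofNat, smul_eq_mul, totalDeriv_X_none, totalDeriv_X_some]
  ring

theorem totalDeriv_totalDeriv_projBeta :
    totalDeriv (totalDeriv (toJet (projBeta c))) = -toJet (projNu c) * X (some 3) := by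
  simp only [toJet, projBeta, projNu, map_add, map_sub, map_mul, map_ofNat, algHom_C,
    algebraMap_eq, rename_X, Matrix.cons_val, Derivation.leibniz, derivation_C,
    Derivation.map_ofNat, smul_eq_mul, totalDeriv_X_none, totalDeriv_X_some,
    Derivation.map_one_eq_zero, Derivation.map_zero]
  ring

theorem totalDeriv_totalDeriv_projNu : totalDeriv (totalDeriv (toJet (projNu c))) = 0 := by
  simp [toJet, projNu, Derivation.leibniz, derivation_C]

def projProlong : Derivation ℝ JetPoly JetPoly :=
  prolongDeriv (toJet (projXi c)) (toJet (projEta c))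

theorem projProlong_totalDeriv (f : JetPoly) :
    projProlong c (totalDeriv f) =
      totalDeriv (projProlong c f) - toJet (projLam c) * totalDeriv f := by
  rw [projProlong, prolongDeriv_totalDeriv, totalDeriv_projXi]

theorem projProlong_y2 : projProlong c (X (some 2)) = toJet (projWeight c) * X (some 2) := by
  rw [projProlong, prolongDeriv_X_some, etaPoly_two]

theorem projProlong_R5Poly :
    projProlong c R5Poly = toJet (3 * (projWeight c - projLam c)) * R5Poly := by
  rw [map_mul, map_sub, map_ofNat]
  exact relInv5_weight (β := toJet (projBeta c)) (projProlong_totalDeriv c)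
    (by simp [projWeight, map_ofNat]) (by simp [projLam, map_ofNat]) (projProlong_y2 c)
    (totalDeriv_projAlpha c) (by simpa using totalDeriv_totalDeriv_projBeta c)
    (totalDeriv_totalDeriv_projNu c)

theorem projProlong_R7Poly :
    projProlong c R7Poly = toJet (8 * (projWeight c - projLam c)) * R7Poly := by
  have h5 := projProlong_R5Poly c
  rw [map_mul, map_sub, map_ofNat] at h5 ⊢
  exact relInv7_weight (β := toJet (projBeta c)) (projProlong_totalDeriv c)
    (by simp [projWeight, map_ofNat]) (by simp [projLam, map_ofNat]) (projProlong_y2 c)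
    (totalDeriv_projAlpha c) (by simpa using totalDeriv_totalDeriv_projBeta c) h5

theorem prolong_projField_R2 (p : Jet) :
    prolong (projField c).1 (projField c).2 R2 p =
      eval ![p.1, p.2 0, p.2 1] (projWeight c) * R2 p := by
  rw [R2_eq_evalJet, prolong_evalJet _ _ (projField_fst c) (projField_snd c), ← projProlong,
    projProlong_y2, evalJet_mul, evalJet_toJet]

theorem prolong_projField_R5 (p : Jet) :
    prolong (projField c).1 (projField c).2 R5 p =
      eval ![p.1, p.2 0, p.2 1] (3 * (projWeight c - projLam c)) * R5 p := by
  rw [R5_eq_evalJet, prolong_evalJet _ _ (projField_fst c) (projField_snd c), ← projProlong,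
    projProlong_R5Poly, evalJet_mul, evalJet_toJet]

theorem prolong_projField_R7 (p : Jet) (hp : p.2 2 ≠ 0) :
    prolong (projField c).1 (projField c).2 R7 p =
      eval ![p.1, p.2 0, p.2 1] (8 * (projWeight c - projLam c)) * R7 p := by
  rw [prolong_congr _ _ ((eventually_y2_ne_zero hp).mono fun _ => R7_eq_evalJet),
    prolong_evalJet _ _ (projField_fst c) (projField_snd c), ← projProlong, projProlong_R7Poly,
    evalJet_mul, evalJet_toJet, R7_eq_evalJet hp]

end Projective

theorem exists_projField_of_mem_projGens {g : (ℝ × ℝ → ℝ) × (ℝ × ℝ → ℝ)} (hg : g ∈ projGens) :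
    ∃ c, g = projField c := by
  simp only [projGens, List.mem_cons, List.not_mem_nil, or_false] at hg
  rcases hg with rfl | rfl | rfl | rfl | rfl | rfl | rfl | rfl
  exacts [⟨![1, 0, 0, 0, 0, 0, 0, 0], by ext v <;> simp [projField]⟩,
    ⟨![0, 1, 0, 0, 0, 0, 0, 0], by ext v <;> simp [projField]⟩,
    ⟨![0, 0, 1, 0, 0, 0, 0, 0], by ext v <;> simp [projField]⟩,
    ⟨![0, 0, 0, 1, 0, 0, 0, 0], by ext v <;> simp [projField]⟩,
    ⟨![0, 0, 0, 0, 1, 0, 0, 0], by ext v <;> simp [projField]⟩,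
    ⟨![0, 0, 0, 0, 0, 1, 0, 0], by ext v <;> simp [projField]⟩,
    ⟨![0, 0, 0, 0, 0, 0, 1, 0], by ext v <;> simp [projField, mul_comm]⟩,
    ⟨![0, 0, 0, 0, 0, 0, 0, 1], by ext v <;> simp [projField, mul_comm]⟩]

theorem H1_eq : H1 = projField ![0, 0, -1, 0, 0, 0, 0, 0] := by
  ext v <;> simp [H1, projField]

theorem H2_eq : H2 = projField ![0, 0, 0, 0, 0, 1, 0, 0] := by
  ext v <;> simp [H2, projField]

/-- `R₂, R₅, R₇` are relative differential invariants of the projective algebra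
with polynomial weights in `(x, y₀, y₁)`, of weights `(2,1)`, `(9,3)`, `(24,8)`
with respect to the Cartan pair `(−x∂_x, y₀∂_{y₀})`. -/
theorem stmt_10 :
    (∀ g ∈ projGens,
      (∃ w : MvPolynomial (Fin 3) ℝ, ∀ p : Jet,
          prolong g.1 g.2 R2 p = MvPolynomial.eval ![p.1, p.2 0, p.2 1] w * R2 p) ∧
      (∃ w : MvPolynomial (Fin 3) ℝ, ∀ p : Jet,
          prolong g.1 g.2 R5 p = MvPolynomial.eval ![p.1, p.2 0, p.2 1] w * R5 p) ∧
      (∃ w : MvPolynomial (Fin 3) ℝ, ∀ p : Jet, p.2 2 ≠ 0 →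
          prolong g.1 g.2 R7 p = MvPolynomial.eval ![p.1, p.2 0, p.2 1] w * R7 p)) ∧
    (∀ p : Jet, prolong H1.1 H1.2 R2 p = 2 * R2 p) ∧
    (∀ p : Jet, prolong H2.1 H2.2 R2 p = 1 * R2 p) ∧
    (∀ p : Jet, prolong H1.1 H1.2 R5 p = 9 * R5 p) ∧
    (∀ p : Jet, prolong H2.1 H2.2 R5 p = 3 * R5 p) ∧
    (∀ p : Jet, p.2 2 ≠ 0 → prolong H1.1 H1.2 R7 p = 24 * R7 p) ∧
    (∀ p : Jet, p.2 2 ≠ 0 → prolong H2.1 H2.2 R7 p = 8 * R7 p) := by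
  refine ⟨fun g hg => ?_, fun p => ?_, fun p => ?_, fun p => ?_, fun p => ?_, fun p hp => ?_,
    fun p hp => ?_⟩
  · obtain ⟨c, rfl⟩ := exists_projField_of_mem_projGens hg
    exact ⟨⟨_, prolong_projField_R2 c⟩, ⟨_, prolong_projField_R5 c⟩, ⟨_, prolong_projField_R7 c⟩⟩
  all_goals
    first | rw [H1_eq] | rw [H2_eq]
    first | rw [prolong_projField_R2] | rw [prolong_projField_R5] | rw [prolong_projField_R7 _ _ hp]
    congr 1
    simp only [projWeight, projLam, projAlpha, projBeta, projNu, Matrix.cons_val, map_add, map_sub,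
      map_mul, map_ofNat, eval_C, eval_X]
    norm_num
end
end

section
/- Let I ⊆ ℝ be a nonempty open interval and y : I → ℝ a C⁵ function with y''(x) ≠ 0 for all x ∈ I. Then 9·y''(x)²·y⁽⁵⁾(x) − 45·y''(x)·y'''(x)·y⁽⁴⁾(x) + 40·y'''(x)³ = 0 for all x ∈ I if and only if the graph of y is contained in a conic, i.e., there exists a nonzero polynomial Q(X,Y) of total degree at most 2 with Q(x, y(x)) = 0 for all x ∈ I. (Thus the vanishing of the projective relative invariant R₅ = 9y₂²y₅ − 45y₂y₃y₄ + 40y₃³ characterizes conics, straight lines arising as the degenerate case y'' ≡ 0.) -/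
/-!
Where `y'' > 0`, put `s = (y'')^(-1/3)`. A direct computation gives
`(s³ s'')' = -(1/27) s¹³ R₅`, so `R₅ = 0` means `s'' = k y''` for a constant `k`, i.e.
`s = k y + α x + β`. Using `y'' s³ = 1` one checks that `g = k y'² + 2α y' + s⁻²` and then
`h = s y' + α y - g x` are constant along the graph, hence so is
`F(x, y) = (k/2) y² + α x y + β y - (g/2) x² - h x`: this is the conic, and `∂F/∂y = s`.
The case `y'' < 0` follows by replacing `y` with `-y`.

Conversely, differentiating `F(x, y(x)) = 0` five times expresses `y'''`, `y⁽⁴⁾`, `y⁽⁵⁾`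
rationally through lower derivatives, with denominator `∂F/∂y = b x + 2 c y + e`; this cannot
vanish where `y'' ≠ 0`, and substituting gives `R₅ = 0`.
-/

noncomputable section

section ConicPolynomial

open MvPolynomial

def conicPoly (a b c d e f : ℝ) : MvPolynomial (Fin 2) ℝ :=
  C a * X 0 ^ 2 + C b * (X 0 * X 1) + C c * X 1 ^ 2 + C d * X 0 + C e * X 1 + C f

@[simp]
theorem eval_conicPoly (a b c d e f x y : ℝ) :
    eval ![x, y] (conicPoly a b c d e f) =
      a * x ^ 2 + b * x * y + c * y ^ 2 + d * x + e * y + f := by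
  simp [conicPoly, mul_assoc]

theorem totalDegree_conicPoly_le (a b c d e f : ℝ) : (conicPoly a b c d e f).totalDegree ≤ 2 := by
  unfold conicPoly
  repeat' refine (totalDegree_add _ _).trans (max_le ?_ ?_)
  all_goals try refine (totalDegree_mul _ _).trans ?_
  all_goals simp only [totalDegree_C, totalDegree_X_pow, totalDegree_X, zero_add]
  all_goals try refine (totalDegree_mul _ _).trans ?_
  all_goals simp [totalDegree_X]

theorem conicPoly_eq_zero_iff {a b c d e f : ℝ} :
    conicPoly a b c d e f = 0 ↔ (a, b, c, d, e, f) = 0 := by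
  refine ⟨fun h => ?_, fun h => ?_⟩
  · have hv : ∀ x y : ℝ, a * x ^ 2 + b * x * y + c * y ^ 2 + d * x + e * y + f = 0 :=
      fun x y => by rw [← eval_conicPoly, h, map_zero]
    have h₁ := hv 0 0; have h₂ := hv 1 0; have h₃ := hv (-1) 0
    have h₄ := hv 0 1; have h₅ := hv 0 (-1); have h₆ := hv 1 1
    simp only [Prod.mk_eq_zero]
    refine ⟨?_, ?_, ?_, ?_, ?_, ?_⟩ <;> linarith
  · simp only [Prod.mk_eq_zero] at h
    obtain ⟨rfl, rfl, rfl, rfl, rfl, rfl⟩ := h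
    simp [conicPoly]

theorem exists_eq_conicPoly {Q : MvPolynomial (Fin 2) ℝ} (hQ : Q.totalDegree ≤ 2) :
    ∃ a b c d e f : ℝ, Q = conicPoly a b c d e f := by
  refine ⟨coeff (Finsupp.single 0 2) Q, coeff (Finsupp.single 0 1 + Finsupp.single 1 1) Q,
    coeff (Finsupp.single 1 2) Q, coeff (Finsupp.single 0 1) Q, coeff (Finsupp.single 1 1) Q,
    coeff 0 Q, ?_⟩
  ext m
  have hm : m = Finsupp.single 0 (m 0) + Finsupp.single 1 (m 1) := by
    ext k; fin_cases k <;> simp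
  simp only [conicPoly, X_pow_eq_monomial]
  simp only [X, monomial_mul, coeff_add, coeff_C_mul, coeff_monomial, coeff_C, one_mul,
    Finsupp.ext_iff, Fin.forall_fin_two, Finsupp.add_apply, Finsupp.single_apply,
    Finsupp.coe_zero, Pi.zero_apply]
  simp only [if_true, show (1 : Fin 2) ≠ 0 by decide, show (0 : Fin 2) ≠ 1 by decide, if_false,
    add_zero, zero_add, mul_ite, mul_one, mul_zero]
  conv_lhs => rw [hm]
  generalize m 0 = i, m 1 = j
  by_cases hij : i + j ≤ 2
  · have : i ≤ 2 := by omega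
    have : j ≤ 2 := by omega
    interval_cases i <;> interval_cases j <;> first | omega | simp
  · rw [coeff_eq_zero_of_totalDegree_lt (by
      rw [← Finsupp.degree_apply, map_add, Finsupp.degree_single, Finsupp.degree_single]; omega)]
    split_ifs <;> first | omega | simp

end ConicPolynomial

def LiesOnConic (I : Set ℝ) (y : ℝ → ℝ) : Prop :=
  ∃ a b c d e f : ℝ, (a, b, c, d, e, f) ≠ 0 ∧
    ∀ x ∈ I, a * x ^ 2 + b * x * y x + c * y x ^ 2 + d * x + e * y x + f = 0

theorem liesOnConic_iff {I : Set ℝ} {y : ℝ → ℝ} :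
    LiesOnConic I y ↔ ∃ Q : MvPolynomial (Fin 2) ℝ, Q ≠ 0 ∧ Q.totalDegree ≤ 2 ∧
      ∀ x ∈ I, MvPolynomial.eval ![x, y x] Q = 0 := by
  constructor
  · rintro ⟨a, b, c, d, e, f, hne, h⟩
    exact ⟨conicPoly a b c d e f, conicPoly_eq_zero_iff.not.2 hne, totalDegree_conicPoly_le .., by
      simpa using h⟩
  · rintro ⟨Q, hQ, hdeg, h⟩
    obtain ⟨a, b, c, d, e, f, rfl⟩ := exists_eq_conicPoly hdeg
    exact ⟨a, b, c, d, e, f, conicPoly_eq_zero_iff.not.1 hQ, by simpa using h⟩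

theorem LiesOnConic.of_neg {I : Set ℝ} {y : ℝ → ℝ} (h : LiesOnConic I fun x => -y x) :
    LiesOnConic I y := by
  obtain ⟨a, b, c, d, e, f, hne, h⟩ := h
  refine ⟨a, -b, c, d, -e, f, fun h0 => hne ?_, fun x hx => by linear_combination h x hx⟩
  simpa only [Prod.mk_eq_zero, neg_eq_zero] using h0

theorem IsOpen.exists_const_of_hasDerivAt_zero {I : Set ℝ} (hI : IsOpen I)
    (hc : IsPreconnected I) {f : ℝ → ℝ} (hf : ∀ x ∈ I, HasDerivAt f 0 x) :
    ∃ a, ∀ x ∈ I, f x = a :=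
  hI.exists_is_const_of_deriv_eq_zero hc
    (fun x hx => (hf x hx).differentiableAt.differentiableWithinAt) fun x hx => (hf x hx).deriv

theorem IsOpen.hasDerivAt_eq_zero_of_eqOn_zero {I : Set ℝ} (hI : IsOpen I) {f f' : ℝ → ℝ}
    (hf : ∀ x ∈ I, HasDerivAt f (f' x) x) (h0 : ∀ x ∈ I, f x = 0) : ∀ x ∈ I, f' x = 0 := by
  intro x hx
  have hloc : f =ᶠ[nhds x] fun _ => 0 := Filter.eventually_of_mem (hI.mem_nhds hx) h0
  rw [← (hf x hx).deriv, hloc.deriv_eq, deriv_const]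

theorem ContDiffOn.hasDerivAt_iterate_deriv {I : Set ℝ} (hI : IsOpen I) {y : ℝ → ℝ} {n : ℕ}
    (hy : ContDiffOn ℝ n y I) {k : ℕ} (hk : k < n) {x : ℝ} (hx : x ∈ I) :
    HasDerivAt (deriv^[k] y) (deriv^[k + 1] y x) x := by
  have hcont : ∀ j ≤ n, ContDiffOn ℝ (n - j : ℕ) (deriv^[j] y) I := by
    intro j hj
    induction j with
    | zero => simpa using hy
    | succ j ih =>
      rw [Function.iterate_succ_apply']
      refine (ih (by omega)).deriv_of_isOpen hI ?_
      exact_mod_cast (show n - (j + 1) + 1 = n - j by omega).le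
  rw [Function.iterate_succ_apply']
  exact ((hcont k hk.le).differentiableOn (by simp; omega)).differentiableAt
    (hI.mem_nhds hx) |>.hasDerivAt

theorem IsPreconnected.pos_or_neg_of_ne_zero {I : Set ℝ} (hc : IsPreconnected I) {f : ℝ → ℝ}
    (hf : ContinuousOn f I) (h0 : ∀ x ∈ I, f x ≠ 0) :
    (∀ x ∈ I, 0 < f x) ∨ ∀ x ∈ I, f x < 0 := by
  by_contra! h
  obtain ⟨⟨a, ha, hfa⟩, b, hb, hfb⟩ := h
  obtain ⟨z, hz, hfz⟩ := hc.intermediate_value₂ ha hb hf continuousOn_const hfa hfb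
  exact h0 z hz hfz

def invariantR5 (y₂ y₃ y₄ y₅ : ℝ) : ℝ := 9 * y₂ ^ 2 * y₅ - 45 * y₂ * y₃ * y₄ + 40 * y₃ ^ 3

theorem invariantR5_neg (y₂ y₃ y₄ y₅ : ℝ) :
    invariantR5 (-y₂) (-y₃) (-y₄) (-y₅) = -invariantR5 y₂ y₃ y₄ y₅ := by
  unfold invariantR5
  ring

theorem invariantR5_eq_zero_of_conic_relations {L P c y₂ y₃ y₄ y₅ : ℝ} (hL : L ≠ 0)
    (h₃ : 3 * P * y₂ + L * y₃ = 0) (h₄ : 6 * c * y₂ ^ 2 + 4 * P * y₃ + L * y₄ = 0)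
    (h₅ : 20 * c * y₂ * y₃ + 5 * P * y₄ + L * y₅ = 0) : invariantR5 y₂ y₃ y₄ y₅ = 0 := by
  have hy₃ : y₃ = -(3 * P * y₂) / L := by rw [eq_div_iff hL]; linear_combination h₃
  have hy₄ : y₄ = -(6 * c * y₂ ^ 2 + 4 * P * y₃) / L := by rw [eq_div_iff hL]; linear_combination h₄
  have hy₅ : y₅ = -(20 * c * y₂ * y₃ + 5 * P * y₄) / L := by
    rw [eq_div_iff hL]; linear_combination h₅
  rw [invariantR5, hy₅, hy₄, hy₃]
  field_simp
  ring

theorem conic_partialY_ne_zero {a b c d e f x y₀ y₁ y₂ y₃ y₄ : ℝ}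
    (hne : (a, b, c, d, e, f) ≠ 0) (hy₂ : y₂ ≠ 0)
    (h₀ : a * x ^ 2 + b * x * y₀ + c * y₀ ^ 2 + d * x + e * y₀ + f = 0)
    (h₁ : 2 * a * x + b * y₀ + d + (b * x + 2 * c * y₀ + e) * y₁ = 0)
    (h₂ : 2 * a + b * y₁ + (b + 2 * c * y₁) * y₁ + (b * x + 2 * c * y₀ + e) * y₂ = 0)
    (h₃ : 3 * (b + 2 * c * y₁) * y₂ + (b * x + 2 * c * y₀ + e) * y₃ = 0)
    (h₄ : 6 * c * y₂ ^ 2 + 4 * (b + 2 * c * y₁) * y₃ + (b * x + 2 * c * y₀ + e) * y₄ = 0) :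
    b * x + 2 * c * y₀ + e ≠ 0 := by
  intro hL
  have hP : b + 2 * c * y₁ = 0 := by simpa [hL, hy₂] using h₃
  have hc : c = 0 := by simpa [hL, hP, hy₂] using h₄
  have hb : b = 0 := by simpa [hc] using hP
  have he : e = 0 := by simpa [hb, hc] using hL
  have ha : a = 0 := by simpa [hb, hc, he] using h₂
  have hd : d = 0 := by simpa [ha, hb, hc, he] using h₁
  have hf : f = 0 := by simpa [ha, hb, hc, hd, he] using h₀
  exact hne (by simp [ha, hb, hc, hd, he, hf])

theorem invariantR5_eq_zero_of_liesOnConic {I : Set ℝ} (hI : IsOpen I)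
    {y y₁ y₂ y₃ y₄ y₅ : ℝ → ℝ} (h₀ : ∀ x ∈ I, HasDerivAt y (y₁ x) x)
    (h₁ : ∀ x ∈ I, HasDerivAt y₁ (y₂ x) x) (h₂ : ∀ x ∈ I, HasDerivAt y₂ (y₃ x) x)
    (h₃ : ∀ x ∈ I, HasDerivAt y₃ (y₄ x) x) (h₄ : ∀ x ∈ I, HasDerivAt y₄ (y₅ x) x)
    (hy₂ : ∀ x ∈ I, y₂ x ≠ 0) (hy : LiesOnConic I y) :
    ∀ x ∈ I, invariantR5 (y₂ x) (y₃ x) (y₄ x) (y₅ x) = 0 := by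
  obtain ⟨a, b, c, d, e, f, hne, hF₀⟩ := hy
  have hid : ∀ x : ℝ, HasDerivAt (fun x => x) 1 x := fun x => hasDerivAt_id' x
  have hL : ∀ x ∈ I, HasDerivAt (fun x => b * x + 2 * c * y x + e) (b + 2 * c * y₁ x) x :=
    fun x hx => (((hid x).const_mul b).add ((h₀ x hx).const_mul (2 * c))).add_const e
      |>.congr_deriv (by ring)
  have hP : ∀ x ∈ I, HasDerivAt (fun x => b + 2 * c * y₁ x) (2 * c * y₂ x) x :=
    fun x hx => ((h₁ x hx).const_mul (2 * c)).const_add b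
  have hF₁ : ∀ x ∈ I, 2 * a * x + b * y x + d + (b * x + 2 * c * y x + e) * y₁ x = 0 :=
    hI.hasDerivAt_eq_zero_of_eqOn_zero (fun x hx =>
      (((((((hid x).fun_pow 2).const_mul a).add (((hid x).const_mul b).fun_mul (h₀ x hx))).add
        (((h₀ x hx).fun_pow 2).const_mul c)).add ((hid x).const_mul d)).add
        ((h₀ x hx).const_mul e)).add_const f |>.congr_deriv (by ring)) hF₀
  have hF₂ : ∀ x ∈ I, 2 * a + b * y₁ x + (b + 2 * c * y₁ x) * y₁ x
      + (b * x + 2 * c * y x + e) * y₂ x = 0 :=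
    hI.hasDerivAt_eq_zero_of_eqOn_zero (fun x hx =>
      (((((hid x).const_mul (2 * a)).add ((h₀ x hx).const_mul b)).add_const d).add
        ((hL x hx).fun_mul (h₁ x hx))).congr_deriv (by ring)) hF₁
  have hF₃ : ∀ x ∈ I, 3 * (b + 2 * c * y₁ x) * y₂ x + (b * x + 2 * c * y x + e) * y₃ x = 0 :=
    hI.hasDerivAt_eq_zero_of_eqOn_zero (fun x hx =>
      (((((h₁ x hx).const_mul b).const_add (2 * a)).add ((hP x hx).fun_mul (h₁ x hx))).add
        ((hL x hx).fun_mul (h₂ x hx))).congr_deriv (by ring)) hF₂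
  have hF₄ : ∀ x ∈ I, 6 * c * y₂ x ^ 2 + 4 * (b + 2 * c * y₁ x) * y₃ x
      + (b * x + 2 * c * y x + e) * y₄ x = 0 :=
    hI.hasDerivAt_eq_zero_of_eqOn_zero (fun x hx =>
      ((((hP x hx).const_mul 3).fun_mul (h₂ x hx)).add ((hL x hx).fun_mul (h₃ x hx))).congr_deriv
        (by ring)) hF₃
  have hF₅ : ∀ x ∈ I, 20 * c * y₂ x * y₃ x + 5 * (b + 2 * c * y₁ x) * y₄ x
      + (b * x + 2 * c * y x + e) * y₅ x = 0 :=
    hI.hasDerivAt_eq_zero_of_eqOn_zero (fun x hx =>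
      (((((h₂ x hx).fun_pow 2).const_mul (6 * c)).add
        (((hP x hx).const_mul 4).fun_mul (h₃ x hx))).add ((hL x hx).fun_mul (h₄ x hx))).congr_deriv
        (by ring)) hF₄
  intro x hx
  exact invariantR5_eq_zero_of_conic_relations
    (conic_partialY_ne_zero hne (hy₂ x hx) (hF₀ x hx) (hF₁ x hx) (hF₂ x hx) (hF₃ x hx) (hF₄ x hx))
    (hF₃ x hx) (hF₄ x hx) (hF₅ x hx)

theorem liesOnConic_of_mul_pow_three_eq_one {I : Set ℝ} (hI : IsOpen I) (hc : IsPreconnected I)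
    (hne : I.Nonempty) {y y₁ y₂ : ℝ → ℝ} (h₀ : ∀ x ∈ I, HasDerivAt y (y₁ x) x)
    (h₁ : ∀ x ∈ I, HasDerivAt y₁ (y₂ x) x) {k α β : ℝ}
    (hs : ∀ x ∈ I, y₂ x * (k * y x + α * x + β) ^ 3 = 1) : LiesOnConic I y := by
  set s : ℝ → ℝ := fun x => k * y x + α * x + β with hs_def
  have hs₃ : ∀ x ∈ I, y₂ x * s x ^ 3 = 1 := hs
  have hs' : ∀ x ∈ I, HasDerivAt s (k * y₁ x + α) x := fun x hx =>
    (((h₀ x hx).const_mul k).add ((hasDerivAt_id' x).const_mul α)).add_const β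
      |>.congr_deriv (by ring)
  clear_value s
  have hs₀ : ∀ x ∈ I, s x ≠ 0 := fun x hx h => by simpa [h] using hs₃ x hx
  obtain ⟨g, hg⟩ : ∃ g, ∀ x ∈ I, k * y₁ x ^ 2 + 2 * α * y₁ x + (s x ^ 2)⁻¹ = g :=
    hI.exists_const_of_hasDerivAt_zero hc fun x hx =>
      ((((h₁ x hx).fun_pow 2).const_mul k).add ((h₁ x hx).const_mul (2 * α))).add
        (((hs' x hx).fun_pow 2).inv (pow_ne_zero 2 (hs₀ x hx))) |>.congr_deriv (by
          have hsx := hs₀ x hx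
          field_simp
          linear_combination (2 * (k * y₁ x + α) * s x) * hs₃ x hx)
  obtain ⟨h, hh⟩ : ∃ h, ∀ x ∈ I, s x * y₁ x + α * y x - g * x = h :=
    hI.exists_const_of_hasDerivAt_zero hc fun x hx =>
      ((((hs' x hx).fun_mul (h₁ x hx)).add ((h₀ x hx).const_mul α)).sub
        ((hasDerivAt_id' x).const_mul g)) |>.congr_deriv (by
          have hsx := hs₀ x hx
          rw [← hg x hx]
          field_simp
          linear_combination hs₃ x hx)
  obtain ⟨f, hf⟩ : ∃ f, ∀ x ∈ I,
      k / 2 * y x ^ 2 + α * x * y x + β * y x - g / 2 * x ^ 2 - h * x = f :=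
    hI.exists_const_of_hasDerivAt_zero hc fun x hx =>
      (((((((h₀ x hx).fun_pow 2).const_mul (k / 2)).add
        (((hasDerivAt_id' x).const_mul α).fun_mul (h₀ x hx))).add ((h₀ x hx).const_mul β)).sub
        (((hasDerivAt_id' x).fun_pow 2).const_mul (g / 2))).sub
        ((hasDerivAt_id' x).const_mul h)) |>.congr_deriv (by
          linear_combination hh x hx - y₁ x * congrFun hs_def x)
  refine ⟨-(g / 2), α, k / 2, -h, β, -f, fun h0 => ?_, fun x hx => by linear_combination hf x hx⟩
  simp only [Prod.mk_eq_zero, neg_eq_zero, div_eq_zero_iff, two_ne_zero, or_false] at h0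
  obtain ⟨-, hα, hk, -, hβ, -⟩ := h0
  obtain ⟨x, hx⟩ := hne
  simpa [hs_def, hα, hk, hβ] using hs₃ x hx

theorem liesOnConic_of_invariantR5_eq_zero_of_pos {I : Set ℝ} (hI : IsOpen I)
    (hc : IsPreconnected I) (hne : I.Nonempty) {y y₁ y₂ y₃ y₄ y₅ : ℝ → ℝ}
    (h₀ : ∀ x ∈ I, HasDerivAt y (y₁ x) x) (h₁ : ∀ x ∈ I, HasDerivAt y₁ (y₂ x) x)
    (h₂ : ∀ x ∈ I, HasDerivAt y₂ (y₃ x) x) (h₃ : ∀ x ∈ I, HasDerivAt y₃ (y₄ x) x)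
    (h₄ : ∀ x ∈ I, HasDerivAt y₄ (y₅ x) x) (hpos : ∀ x ∈ I, 0 < y₂ x)
    (hR : ∀ x ∈ I, invariantR5 (y₂ x) (y₃ x) (y₄ x) (y₅ x) = 0) : LiesOnConic I y := by
  set s : ℝ → ℝ := fun x => y₂ x ^ (-(1 / 3) : ℝ) with hs_def
  have hs₃ : ∀ x ∈ I, y₂ x * s x ^ 3 = 1 := fun x hx => by
    rw [hs_def, ← Real.rpow_mul_natCast (hpos x hx).le]
    norm_num [Real.rpow_neg_one, (hpos x hx).ne']
  have hs' : ∀ x ∈ I, HasDerivAt s (-(1 / 3) * s x ^ 4 * y₃ x) x := fun x hx => by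
    convert (h₂ x hx).rpow_const (p := -(1 / 3)) (Or.inl (hpos x hx).ne') using 1
    rw [hs_def, ← Real.rpow_mul_natCast (hpos x hx).le]
    norm_num
    ring
  clear_value s
  -- `s³ s''`, whose derivative is `-(1/27) s¹³ R₅`
  obtain ⟨k, hk⟩ : ∃ k, ∀ x ∈ I, 4 / 9 * s x ^ 10 * y₃ x ^ 2 - 1 / 3 * s x ^ 7 * y₄ x = k :=
    hI.exists_const_of_hasDerivAt_zero hc fun x hx =>
      (((((hs' x hx).fun_pow 10).const_mul (4 / 9)).fun_mul ((h₃ x hx).fun_pow 2)).sub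
        ((((hs' x hx).fun_pow 7).const_mul (1 / 3)).fun_mul (h₄ x hx))).congr_deriv (by
          have hR' := hR x hx
          unfold invariantR5 at hR'
          linear_combination (1 / 3 * s x ^ 7 * y₅ x * (y₂ x * s x ^ 3 + 1)
            - 5 / 3 * s x ^ 10 * y₃ x * y₄ x) * hs₃ x hx - 1 / 27 * s x ^ 13 * hR')
  obtain ⟨α, hα⟩ : ∃ α, ∀ x ∈ I, -(1 / 3) * s x ^ 4 * y₃ x - k * y₁ x = α :=
    hI.exists_const_of_hasDerivAt_zero hc fun x hx =>
      (((((hs' x hx).fun_pow 4).const_mul (-(1 / 3))).fun_mul (h₃ x hx)).sub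
        ((h₁ x hx).const_mul k)).congr_deriv (by
          linear_combination (-(4 / 9 * s x ^ 7 * y₃ x ^ 2 - 1 / 3 * s x ^ 4 * y₄ x)) * hs₃ x hx
            + y₂ x * hk x hx)
  obtain ⟨β, hβ⟩ : ∃ β, ∀ x ∈ I, s x - k * y x - α * x = β :=
    hI.exists_const_of_hasDerivAt_zero hc fun x hx =>
      (((hs' x hx).sub ((h₀ x hx).const_mul k)).sub ((hasDerivAt_id' x).const_mul α)).congr_deriv
        (by linear_combination hα x hx)
  refine liesOnConic_of_mul_pow_three_eq_one hI hc hne h₀ h₁ (k := k) (α := α) (β := β)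
    fun x hx => ?_
  rw [show k * y x + α * x + β = s x by linear_combination -hβ x hx]
  exact hs₃ x hx

theorem liesOnConic_of_invariantR5_eq_zero {I : Set ℝ} (hI : IsOpen I)
    (hc : IsPreconnected I) (hne : I.Nonempty) {y y₁ y₂ y₃ y₄ y₅ : ℝ → ℝ}
    (h₀ : ∀ x ∈ I, HasDerivAt y (y₁ x) x) (h₁ : ∀ x ∈ I, HasDerivAt y₁ (y₂ x) x)
    (h₂ : ∀ x ∈ I, HasDerivAt y₂ (y₃ x) x) (h₃ : ∀ x ∈ I, HasDerivAt y₃ (y₄ x) x)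
    (h₄ : ∀ x ∈ I, HasDerivAt y₄ (y₅ x) x) (hy₂ : ∀ x ∈ I, y₂ x ≠ 0)
    (hR : ∀ x ∈ I, invariantR5 (y₂ x) (y₃ x) (y₄ x) (y₅ x) = 0) : LiesOnConic I y := by
  have hcont : ContinuousOn y₂ I := fun x hx => (h₂ x hx).continuousAt.continuousWithinAt
  rcases hc.pos_or_neg_of_ne_zero hcont hy₂ with hpos | hneg
  · exact liesOnConic_of_invariantR5_eq_zero_of_pos hI hc hne h₀ h₁ h₂ h₃ h₄ hpos hR
  · refine LiesOnConic.of_neg <| liesOnConic_of_invariantR5_eq_zero_of_pos hI hc hne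
      (fun x hx => (h₀ x hx).neg) (fun x hx => (h₁ x hx).neg) (fun x hx => (h₂ x hx).neg)
      (fun x hx => (h₃ x hx).neg) (fun x hx => (h₄ x hx).neg) (fun x hx => neg_pos.2 (hneg x hx))
      fun x hx => ?_
    rw [invariantR5_neg, hR x hx, neg_zero]

/-- For a C⁵ graph `y = y(x)` over a nonempty open interval with `y'' ≠ 0`,
the vanishing of the projective relative invariant
`R₅ = 9y''²y⁽⁵⁾ − 45y''y'''y⁽⁴⁾ + 40y'''³` characterizes the graphs contained
in a conic (a zero set of a nonzero polynomial of total degree ≤ 2). -/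
theorem stmt_11 (I : Set ℝ) (hI : IsOpen I) (hne : I.Nonempty)
    (hconn : IsPreconnected I) (y : ℝ → ℝ) (hy : ContDiffOn ℝ 5 y I)
    (hy2 : ∀ x ∈ I, deriv (deriv y) x ≠ 0) :
    (∀ x ∈ I,
        9 * (deriv (deriv y) x) ^ 2 * deriv (deriv (deriv (deriv (deriv y)))) x -
          45 * deriv (deriv y) x * deriv (deriv (deriv y)) x *
            deriv (deriv (deriv (deriv y))) x +
          40 * (deriv (deriv (deriv y)) x) ^ 3 = 0) ↔
      ∃ Q : MvPolynomial (Fin 2) ℝ, Q ≠ 0 ∧ Q.totalDegree ≤ 2 ∧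
        ∀ x ∈ I, MvPolynomial.eval ![x, y x] Q = 0 := by
  have jet : ∀ k < 5, ∀ x ∈ I, HasDerivAt (deriv^[k] y) (deriv^[k + 1] y x) x :=
    fun k hk x hx => hy.hasDerivAt_iterate_deriv (n := 5) hI hk hx
  rw [← liesOnConic_iff]
  exact ⟨liesOnConic_of_invariantR5_eq_zero hI hconn hne (jet 0 (by norm_num))
      (jet 1 (by norm_num)) (jet 2 (by norm_num)) (jet 3 (by norm_num)) (jet 4 (by norm_num)) hy2,
    invariantR5_eq_zero_of_liesOnConic hI (jet 0 (by norm_num)) (jet 1 (by norm_num))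
      (jet 2 (by norm_num)) (jet 3 (by norm_num)) (jet 4 (by norm_num)) hy2⟩
end
end
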